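/- arXiv:2407.17973 — 9 statements merged into one kernel-verified Lean document; each statement's English description precedes it below -/
import Mathlib

section
/- Consider any broadcasted party-list election E = (N, C, k, l, A, L) with parties P_1, …, P_g whose popularities are strictly decreasing (n_1 > n_2 > … > n_g), in which every party has at least l candidates (|P_i| ≥ l for all i) and the parties jointly have at least k candidates (Σ_{i=1}^g |P_i| ≥ k). Then every winning committee W ∈ AV(E) has CC-score s_CC(A, W) = Σ_{j=1}^{s} n_j, where s is the least integer t with Σ_{i=1}^{t} |P_i| ≥ k. -/
open Finset

/-- An election `E = (N, C, k, l, A, L)`: voters form the finite type `V`,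
candidates the finite type `C`, `k` is the committee size, `l` the ballot limit,
`A i` is the approval set of voter `i` and `L i` their ballot. -/
structure Election (V C : Type*) [Fintype V] [DecidableEq V] [Fintype C] [DecidableEq C] where
  k : ℕ
  l : ℕ
  A : V → Finset C
  L : V → Finset C
  k_le_card : k ≤ Fintype.card C
  one_le_l : 1 ≤ l
  l_le_k : l ≤ k
  ballot_card : ∀ i, (L i).card = l
  ballot_sub_approval : ∀ i, l ≤ (A i).card → L i ⊆ A i
  approval_ssub_ballot : ∀ i, (A i).card < l → A i ⊂ L i

variable {V C : Type*} [Fintype V] [DecidableEq V] [Fintype C] [DecidableEq C]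

/-- The LV-score of a candidate: the number of voters whose ballot contains it. -/
def sLVc (E : Election V C) (c : C) : ℕ := (univ.filter fun i => c ∈ E.L i).card

/-- The AV-score of a candidate: the number of voters approving it. -/
def sAVc (E : Election V C) (c : C) : ℕ := (univ.filter fun i => c ∈ E.A i).card

/-- The LV-score of a committee. -/
def sLV (E : Election V C) (W : Finset C) : ℕ := ∑ c ∈ W, sLVc E c

/-- The AV-score of a committee. -/
def sAV (E : Election V C) (W : Finset C) : ℕ := ∑ c ∈ W, sAVc E c

/-- The winning committees of Limited Voting: size-`k` committees maximizing the LV-score. -/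
def LVwin (E : Election V C) : Set (Finset C) :=
  {W | W.card = E.k ∧ ∀ W' : Finset C, W'.card = E.k → sLV E W' ≤ sLV E W}

/-- The winning committees of Approval Voting: size-`k` committees maximizing the AV-score. -/
def AVwin (E : Election V C) : Set (Finset C) :=
  {W | W.card = E.k ∧ ∀ W' : Finset C, W'.card = E.k → sAV E W' ≤ sAV E W}

/-- The Chamberlin–Courant score of a committee: the number of represented voters. -/
def sCC (E : Election V C) (W : Finset C) : ℕ :=
  (univ.filter fun i => (W ∩ E.A i).Nonempty).card

/-- `A` is a party-list profile: approval sets are nonempty and pairwise equal or disjoint. -/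
def PartyList (E : Election V C) : Prop :=
  (∀ i, (E.A i).Nonempty) ∧ ∀ i j : V, E.A i = E.A j ∨ E.A i ∩ E.A j = ∅

/-- `E` is consistent with some broadcasting (linear) order on candidates, encoded by an
injective priority function `f` (`f c < f c'` meaning `c ≻ c'`). -/
def Broadcasted (E : Election V C) : Prop :=
  ∃ f : C → ℕ, Function.Injective f ∧
    ∀ (i : V) (c c' : C), c ∈ E.A i → c' ∈ E.A i → c ∈ E.L i → c' ∉ E.L i → f c < f c'

/-- The number of voters of party `Pj`. -/
def nParty (E : Election V C) (Pj : Finset C) : ℕ := (univ.filter fun i => E.A i = Pj).card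

/-- In a broadcasted party-list election with strictly decreasing party
popularities, where every party has at least `l` candidates and the parties jointly
have at least `k` candidates, every AV-winning committee `W` has
`s_CC(A, W) = Σ_{j=1}^{s} n_j`, where `s` is the least `t` with `Σ_{i=1}^{t} |P_i| ≥ k`. -/
theorem stmt0 (E : Election V C) (hPL : PartyList E) (hB : Broadcasted E)
    (g : ℕ) (P : Fin g → Finset C)
    (hPall : ∀ i : V, ∃ j, E.A i = P j)
    (hPrep : ∀ j, ∃ i : V, E.A i = P j)
    (hanti : ∀ j j' : Fin g, j < j' → nParty E (P j') < nParty E (P j))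
    (hPl : ∀ j, E.l ≤ (P j).card)
    (hPk : E.k ≤ ∑ j : Fin g, (P j).card)
    (s : ℕ)
    (hs : E.k ≤ ∑ j ∈ univ.filter (fun j : Fin g => (j : ℕ) < s), (P j).card)
    (hsleast : ∀ t : ℕ,
      E.k ≤ ∑ j ∈ univ.filter (fun j : Fin g => (j : ℕ) < t), (P j).card → s ≤ t) :
    ∀ W ∈ AVwin E,
      sCC E W = ∑ j ∈ univ.filter (fun j : Fin g => (j : ℕ) < s), nParty E (P j) := by

  intro W hW
  obtain ⟨hWcard, hWmax⟩ := hW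
  have hk1 : 1 ≤ E.k := le_trans E.one_le_l E.l_le_k
  have hinj : Function.Injective P := by
    intro j j' h
    by_contra hne
    rcases lt_or_gt_of_ne hne with hlt | hlt
    · exact absurd (hanti j j' hlt) (by rw [h]; exact lt_irrefl _)
    · exact absurd (hanti j' j hlt) (by rw [h]; exact lt_irrefl _)
  have hdisj : ∀ j j' : Fin g, j ≠ j' → P j ∩ P j' = ∅ := by
    intro j j' hne
    obtain ⟨i, hi⟩ := hPrep j
    obtain ⟨i', hi'⟩ := hPrep j'
    rcases hPL.2 i i' with h | h
    · rw [hi, hi'] at h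
      exact absurd (hinj h) hne
    · rw [← hi, ← hi']; exact h
  have hPne : ∀ j, (P j).Nonempty := by
    intro j; obtain ⟨i, hi⟩ := hPrep j; rw [← hi]; exact hPL.1 i
  have hpos : ∀ j, 0 < nParty E (P j) := by
    intro j
    obtain ⟨i, hi⟩ := hPrep j
    exact Finset.card_pos.2 ⟨i, Finset.mem_filter.2 ⟨Finset.mem_univ i, hi⟩⟩
  have hv : ∀ (j : Fin g) (c : C), c ∈ P j → sAVc E c = nParty E (P j) := by
    intro j c hc
    unfold sAVc nParty
    congr 1
    apply Finset.filter_congr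
    intro i _
    constructor
    · intro hci
      obtain ⟨j', hj'⟩ := hPall i
      have hj'eq : j' = j := by
        by_contra hne
        have h := hdisj j' j hne
        have hmem : c ∈ P j' ∩ P j := Finset.mem_inter.2 ⟨hj' ▸ hci, hc⟩
        rw [h] at hmem
        exact absurd hmem (Finset.notMem_empty c)
      rw [hj', hj'eq]
    · intro h; rw [h]; exact hc
  have hv0 : ∀ c : C, (∀ j, c ∉ P j) → sAVc E c = 0 := by
    intro c hc
    unfold sAVc
    rw [Finset.card_eq_zero, Finset.filter_eq_empty_iff]
    intro i _ hci
    obtain ⟨j, hj⟩ := hPall i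
    exact hc j (hj ▸ hci)
  have hexch : ∀ c ∈ W, ∀ c' : C, c' ∉ W → sAVc E c' ≤ sAVc E c := by
    intro c hc c' hc'
    have hce : c' ∉ W.erase c := fun h => hc' (Finset.mem_of_mem_erase h)
    have hcard : (insert c' (W.erase c)).card = E.k := by
      rw [Finset.card_insert_of_notMem hce, Finset.card_erase_of_mem hc, hWcard]
      omega
    have h := hWmax _ hcard
    unfold sAV at h
    rw [Finset.sum_insert hce] at h
    have h2 : ∑ x ∈ W, sAVc E x = sAVc E c + ∑ x ∈ W.erase c, sAVc E x :=
      (Finset.add_sum_erase W (sAVc E) hc).symm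
    omega
  set T := univ.filter (fun j : Fin g => (j : ℕ) < s) with hT
  set S := T.biUnion P with hS
  have hScard : E.k ≤ S.card := by
    rw [hS, Finset.card_biUnion]
    · exact hs
    · intro j hj j' hj' hne
      exact Finset.disjoint_iff_inter_eq_empty.2 (hdisj j j' hne)
  have hWS : W ⊆ S := by
    intro c hc
    by_contra hcS
    have hex : ∃ c' ∈ S, c' ∉ W := by
      by_contra h
      push_neg at h
      have hlt : S.card < W.card :=
        Finset.card_lt_card (Finset.ssubset_def.2 ⟨h, fun hws => hcS (hws hc)⟩)
      omega
    obtain ⟨c', hc'S, hc'W⟩ := hex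
    obtain ⟨j', hj'T, hc'P⟩ := Finset.mem_biUnion.1 hc'S
    have hj's : (j' : ℕ) < s := (Finset.mem_filter.1 hj'T).2
    have hle := hexch c hc c' hc'W
    rw [hv j' c' hc'P] at hle
    by_cases hcj : ∃ j, c ∈ P j
    · obtain ⟨j, hcj⟩ := hcj
      have hjs : ¬ (j : ℕ) < s := fun hh =>
        hcS (Finset.mem_biUnion.2 ⟨j, Finset.mem_filter.2 ⟨Finset.mem_univ j, hh⟩, hcj⟩)
      rw [hv j c hcj] at hle
      have hlt2 : nParty E (P j) < nParty E (P j') :=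
        hanti j' j (Fin.lt_def.2 (by omega))
      omega
    · push_neg at hcj
      rw [hv0 c hcj] at hle
      have := hpos j'
      omega
  have hWP : ∀ j : Fin g, (j : ℕ) < s → (W ∩ P j).Nonempty := by
    intro j hjs
    by_contra hne
    rw [Finset.not_nonempty_iff_eq_empty] at hne
    obtain ⟨c', hc'⟩ := hPne j
    have hc'W : c' ∉ W := by
      intro h
      have hmem : c' ∈ W ∩ P j := Finset.mem_inter.2 ⟨h, hc'⟩
      rw [hne] at hmem; exact absurd hmem (Finset.notMem_empty c')
    have hex : ∃ c ∈ W, sAVc E c < nParty E (P j) := by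
      by_contra h
      push_neg at h
      have hsub : W ⊆ (univ.filter (fun j'' : Fin g => (j'' : ℕ) < (j : ℕ))).biUnion P := by
        intro c hcW
        obtain ⟨j'', hj''T, hcP⟩ := Finset.mem_biUnion.1 (hWS hcW)
        have hge := h c hcW
        rw [hv j'' c hcP] at hge
        have hne'' : j'' ≠ j := by
          intro hEq; subst hEq
          have hmem : c ∈ W ∩ P j'' := Finset.mem_inter.2 ⟨hcW, hcP⟩
          rw [hne] at hmem; exact absurd hmem (Finset.notMem_empty c)
        have hlt : (j'' : ℕ) < (j : ℕ) := by
          by_contra hge2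
          have hjj : (j : ℕ) < (j'' : ℕ) := by
            rcases Nat.lt_or_ge (j : ℕ) (j'' : ℕ) with h1 | h1
            · exact h1
            · exact absurd (Fin.ext (by omega : (j'' : ℕ) = (j : ℕ))) hne''
          have := hanti j j'' (Fin.lt_def.2 hjj)
          omega
        exact Finset.mem_biUnion.2 ⟨j'', Finset.mem_filter.2 ⟨Finset.mem_univ _, hlt⟩, hcP⟩
      have hcardle := Finset.card_le_card hsub
      have hble := Finset.card_biUnion_le
        (s := univ.filter (fun j'' : Fin g => (j'' : ℕ) < (j : ℕ))) (t := P)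
      have hlt : ∑ j'' ∈ univ.filter (fun j'' : Fin g => (j'' : ℕ) < (j : ℕ)), (P j'').card < E.k := by
        by_contra h2
        push_neg at h2
        have := hsleast (j : ℕ) h2
        omega
      omega
    obtain ⟨c, hcW, hclt⟩ := hex
    have hle := hexch c hcW c' hc'W
    rw [hv j c' hc'] at hle
    omega
  have hchar : ∀ i : V, (W ∩ E.A i).Nonempty ↔ ∃ j ∈ T, E.A i = P j := by
    intro i
    obtain ⟨j, hj⟩ := hPall i
    rw [hj]
    constructor
    · rintro ⟨c, hcmem⟩
      rw [Finset.mem_inter] at hcmem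
      obtain ⟨hcW, hcP⟩ := hcmem
      obtain ⟨j', hj'T, hcP'⟩ := Finset.mem_biUnion.1 (hWS hcW)
      have hjj : j' = j := by
        by_contra hne
        have h := hdisj j' j hne
        have hmem : c ∈ P j' ∩ P j := Finset.mem_inter.2 ⟨hcP', hcP⟩
        rw [h] at hmem; exact absurd hmem (Finset.notMem_empty c)
      exact ⟨j, hjj ▸ hj'T, rfl⟩
    · rintro ⟨j', hj'T, hEq⟩
      have hjj : j = j' := hinj hEq
      subst hjj
      exact hWP j (Finset.mem_filter.1 hj'T).2
  unfold sCC
  have hfilter : univ.filter (fun i => (W ∩ E.A i).Nonempty)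
      = T.biUnion (fun j => univ.filter (fun i => E.A i = P j)) := by
    ext i
    simp only [Finset.mem_filter, Finset.mem_biUnion, Finset.mem_univ, true_and]
    rw [hchar i]
  have hdisj2 : ∀ j ∈ T, ∀ j' ∈ T, j ≠ j' →
      Disjoint (univ.filter (fun i => E.A i = P j)) (univ.filter (fun i => E.A i = P j')) := by
    intro j _ j' _ hne
    rw [Finset.disjoint_left]
    intro i hi hi'
    have h1 := (Finset.mem_filter.1 hi).2
    have h2 := (Finset.mem_filter.1 hi').2
    exact hne (hinj (h1.symm.trans h2))
  rw [hfilter, Finset.card_biUnion hdisj2]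
  rfl
end

section
/- Consider any broadcasted party-list election E = (N, C, k, l, A, L) with parties P_1, …, P_g whose popularities are strictly decreasing (n_1 > n_2 > … > n_g) and in which every party has at least l candidates (|P_i| ≥ l for all i). Then every winning committee W ∈ LV(E) has CC-score s_CC(A, W) = Σ_{i=1}^{min(⌈k/l⌉, g)} n_i. -/
open Finset

variable {V C : Type*} [Fintype V] [DecidableEq V] [Fintype C] [DecidableEq C]

/-! Since every party has at least `l` candidates, ballots lie inside approval sets, and consistency
with a broadcasting order forces all voters of party `P j` to cast one common ballot `B j`.
A candidate of `B j` then has LV-score `n_j` and every other candidate has score `0`. Since the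
`n_j` strictly decrease, an LV-winning committee exchanges no candidate for a better one, so it
meets `B j` whenever the `j` blocks before it do not fill the `k` seats (`j * l < k`), and it meets
no party `P j` with `j * l ≥ k`, because then the `j` blocks before it are all strictly better and
fill the committee. The represented voters are therefore those of the first `⌈k/l⌉` parties. -/

open Function

section LimitedVoting

variable {E : Election V C} {W : Finset C}

theorem sLVc_le_of_mem_LVwin (hW : W ∈ LVwin E) {b c : C} (hc : c ∈ W) (hb : b ∉ W) :
    sLVc E b ≤ sLVc E c := by
  obtain ⟨hcard, hmax⟩ := hW
  have hbW : b ∉ W.erase c := fun h => hb (mem_of_mem_erase h)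
  have hswap := hmax (insert b (W.erase c)) (by
    rw [card_insert_of_notMem hbW, card_erase_of_mem hc,
      Nat.sub_add_cancel (card_pos.2 ⟨c, hc⟩), hcard])
  rw [sLV, sLV, sum_insert hbW, ← add_sum_erase _ _ hc] at hswap
  omega

theorem mem_of_LVwin_of_card_lt (hW : W ∈ LVwin E) {U : Finset C} (hU : U.card < E.k) {b : C}
    (hlt : ∀ c ∈ W, c ∉ U → sLVc E c < sLVc E b) : b ∈ W := by
  by_contra hb
  obtain ⟨c, hcW, hcU⟩ := exists_mem_notMem_of_card_lt_card (hW.1 ▸ hU)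
  exact (sLVc_le_of_mem_LVwin hW hcW hb).not_gt (hlt c hcW hcU)

theorem notMem_of_LVwin_of_le_card (hW : W ∈ LVwin E) {U : Finset C} (hU : E.k ≤ U.card) {c : C}
    (hlt : ∀ b ∈ U, sLVc E c < sLVc E b) : c ∉ W := by
  intro hc
  have hcU : c ∉ U := fun h => (hlt c h).false
  obtain ⟨b, hbU, hbW⟩ := not_subset.1 fun hUW =>
    hcU (eq_of_subset_of_card_le hUW (hW.1 ▸ hU) ▸ hc)
  exact (sLVc_le_of_mem_LVwin hW hc hbW).not_gt (hlt b hbU)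

end LimitedVoting

theorem Broadcasted.ballot_eq {E : Election V C} (hB : Broadcasted E) {i i' : V}
    (hi : E.L i ⊆ E.A i) (hi' : E.L i' ⊆ E.A i') (hA : E.A i = E.A i') : E.L i = E.L i' := by
  obtain ⟨f, -, hf⟩ := hB
  have hcard : (E.L i).card = (E.L i').card := by rw [E.ballot_card, E.ballot_card]
  refine eq_of_subset_of_card_le (fun c hc => ?_) hcard.ge
  by_contra hc'
  obtain ⟨d, hd, hd'⟩ := not_subset.1 fun h : E.L i' ⊆ E.L i =>
    hc' ((eq_of_subset_of_card_le h hcard.le).symm ▸ hc)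
  exact (hf i c d (hi hc) (hA ▸ hi' hd) hc hd').asymm (hf i' d c (hi' hd) (hA ▸ hi hc) hd hc')

theorem PartyList.pairwise_disjoint {ι : Type*} {E : Election V C} (hPL : PartyList E)
    {P : ι → Finset C} (hP : Injective P) (hrep : ∀ j, ∃ i, E.A i = P j) :
    Pairwise (Disjoint on P) := by
  intro j j' hne
  obtain ⟨i, hi⟩ := hrep j
  obtain ⟨i', hi'⟩ := hrep j'
  rcases hPL.2 i i' with h | h
  · exact absurd (hP (hi.symm.trans (h.trans hi'))) hne
  · rwa [onFun, disjoint_iff_inter_eq_empty, ← hi, ← hi']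

theorem sCC_eq_sum_nParty {ι : Type*} [Fintype ι] {E : Election V C} {P : ι → Finset C}
    (hA : ∀ i, ∃ j, E.A i = P j) (hP : Injective P) (W : Finset C) :
    sCC E W = ∑ j ∈ univ.filter fun j => (W ∩ P j).Nonempty, nParty E (P j) := by
  have hfibres : (univ.filter fun i => (W ∩ E.A i).Nonempty) =
      (univ.filter fun j => (W ∩ P j).Nonempty).biUnion
        fun j => univ.filter fun i => E.A i = P j := by
    ext i
    obtain ⟨j, hj⟩ := hA i
    simp only [mem_filter, mem_univ, true_and, mem_biUnion]
    exact ⟨fun h => ⟨j, hj ▸ h, hj⟩, fun ⟨j', h, hj'⟩ => hj' ▸ h⟩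
  rw [sCC, hfibres, card_biUnion]
  · rfl
  · intro j _ j' _ hne
    exact disjoint_filter.2 fun i _ h h' => hne (hP (h.symm.trans h'))

structure PartyBallots {ι : Type*} (E : Election V C) (P B : ι → Finset C) : Prop where
  approval_eq : ∀ i, ∃ j, E.A i = P j
  pairwise_disjoint : Pairwise (Disjoint on P)
  ballot_eq : ∀ i j, E.A i = P j → E.L i = B j
  ballot_subset : ∀ j, B j ⊆ P j
  card_ballot : ∀ j, (B j).card = E.l

namespace PartyBallots

variable {E : Election V C}

section

variable {ι : Type*} {P B : ι → Finset C}

theorem mem_ballot_iff (h : PartyBallots E P B) {i : V} {j : ι} {c : C} (hc : c ∈ B j) :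
    c ∈ E.L i ↔ E.A i = P j := by
  refine ⟨fun hci => ?_, fun hA => h.ballot_eq i j hA ▸ hc⟩
  obtain ⟨j', hj'⟩ := h.approval_eq i
  rw [h.ballot_eq i j' hj'] at hci
  rw [hj', not_ne_iff.1 fun hne =>
    disjoint_left.1 (h.pairwise_disjoint hne) (h.ballot_subset j' hci) (h.ballot_subset j hc)]

theorem sLVc_eq_of_mem (h : PartyBallots E P B) {j : ι} {c : C} (hc : c ∈ B j) :
    sLVc E c = nParty E (P j) := by
  rw [sLVc, nParty, filter_congr fun i _ => h.mem_ballot_iff hc]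

theorem sLVc_eq_zero (h : PartyBallots E P B) {c : C} (hc : ∀ j, c ∉ B j) : sLVc E c = 0 := by
  rw [sLVc, card_eq_zero, filter_eq_empty_iff]
  intro i _ hci
  obtain ⟨j, hj⟩ := h.approval_eq i
  exact hc j (h.ballot_eq i j hj ▸ hci)

end

section

variable {g : ℕ} {P B : Fin g → Finset C}

theorem card_biUnion_Iio (h : PartyBallots E P B) (j : Fin g) :
    ((Iio j).biUnion B).card = j * E.l := by
  rw [card_biUnion fun a _ b _ hab => (h.pairwise_disjoint hab).mono (h.ballot_subset a)
    (h.ballot_subset b), sum_congr rfl fun j _ => h.card_ballot j, sum_const, Fin.card_Iio,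
    smul_eq_mul]

theorem sLVc_lt_of_notMem_biUnion_Iic (h : PartyBallots E P B)
    (hanti : StrictAnti fun j => nParty E (P j)) (hpos : ∀ j, 0 < nParty E (P j)) {j : Fin g}
    {c : C} (hc : c ∉ (Iic j).biUnion B) : sLVc E c < nParty E (P j) := by
  by_cases hcB : ∃ j', c ∈ B j'
  · obtain ⟨j', hj'⟩ := hcB
    rw [h.sLVc_eq_of_mem hj']
    exact hanti (not_le.1 fun hle => hc (mem_biUnion.2 ⟨j', mem_Iic.2 hle, hj'⟩))
  · rw [h.sLVc_eq_zero (not_exists.1 hcB)]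
    exact hpos j

theorem inter_ballot_nonempty_of_LVwin (h : PartyBallots E P B)
    (hanti : StrictAnti fun j => nParty E (P j)) (hpos : ∀ j, 0 < nParty E (P j))
    {W : Finset C} (hW : W ∈ LVwin E) {j : Fin g} (hj : j * E.l < E.k) :
    (W ∩ B j).Nonempty := by
  by_contra hWB
  obtain ⟨b, hb⟩ := card_pos.1 (h.card_ballot j ▸ E.one_le_l)
  refine hWB ⟨b, mem_inter.2 ⟨?_, hb⟩⟩
  refine mem_of_LVwin_of_card_lt hW (h.card_biUnion_Iio j ▸ hj) fun c hcW hcU => ?_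
  rw [h.sLVc_eq_of_mem hb]
  refine h.sLVc_lt_of_notMem_biUnion_Iic hanti hpos ?_
  rw [← Iio_insert, biUnion_insert, mem_union, not_or]
  exact ⟨fun hcB => hWB ⟨c, mem_inter.2 ⟨hcW, hcB⟩⟩, hcU⟩

theorem inter_party_eq_empty_of_LVwin (h : PartyBallots E P B)
    (hanti : StrictAnti fun j => nParty E (P j)) (hpos : ∀ j, 0 < nParty E (P j))
    {W : Finset C} (hW : W ∈ LVwin E) {j : Fin g} (hj : E.k ≤ j * E.l) : W ∩ P j = ∅ := by
  refine eq_empty_of_forall_notMem fun c hc => ?_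
  refine notMem_of_LVwin_of_le_card hW (h.card_biUnion_Iio j ▸ hj) (fun b hb => ?_)
    (mem_inter.1 hc).1
  obtain ⟨j', hj', hbj'⟩ := mem_biUnion.1 hb
  rw [h.sLVc_eq_of_mem hbj']
  refine h.sLVc_lt_of_notMem_biUnion_Iic hanti hpos fun hc' => ?_
  obtain ⟨j'', hj'', hcj''⟩ := mem_biUnion.1 hc'
  exact disjoint_left.1 (h.pairwise_disjoint ((mem_Iic.1 hj'').trans_lt (mem_Iio.1 hj')).ne)
    (h.ballot_subset j'' hcj'') (mem_inter.1 hc).2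

theorem inter_party_nonempty_iff_of_LVwin (h : PartyBallots E P B)
    (hanti : StrictAnti fun j => nParty E (P j)) (hpos : ∀ j, 0 < nParty E (P j))
    {W : Finset C} (hW : W ∈ LVwin E) (j : Fin g) : (W ∩ P j).Nonempty ↔ j * E.l < E.k :=
  ⟨fun hne => not_le.1 fun hj => hne.ne_empty (h.inter_party_eq_empty_of_LVwin hanti hpos hW hj),
    fun hj => (h.inter_ballot_nonempty_of_LVwin hanti hpos hW hj).mono
      (inter_subset_inter_left (h.ballot_subset j))⟩

end

end PartyBallots

/-- In a broadcasted party-list election with strictly decreasing party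
popularities where every party has at least `l` candidates, every LV-winning committee
`W` has `s_CC(A, W) = Σ_{i=1}^{min(⌈k/l⌉, g)} n_i`. -/
theorem stmt1 (E : Election V C) (hPL : PartyList E) (hB : Broadcasted E)
    (g : ℕ) (P : Fin g → Finset C)
    (hPall : ∀ i : V, ∃ j, E.A i = P j)
    (hPrep : ∀ j, ∃ i : V, E.A i = P j)
    (hanti : ∀ j j' : Fin g, j < j' → nParty E (P j') < nParty E (P j))
    (hPl : ∀ j, E.l ≤ (P j).card) :
    ∀ W ∈ LVwin E,
      sCC E W = ∑ j ∈ univ.filter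
        (fun j : Fin g => (j : ℕ) < min ((E.k + E.l - 1) / E.l) g), nParty E (P j) := by
  intro W hW
  have hP : Injective P :=
    Injective.of_comp (f := nParty E) (show StrictAnti fun j => nParty E (P j) from hanti).injective
  have hLA : ∀ i, E.L i ⊆ E.A i := fun i => by
    obtain ⟨j, hj⟩ := hPall i
    exact E.ballot_sub_approval i (hj ▸ hPl j)
  choose rep hrep using hPrep
  have hPB : PartyBallots E P fun j => E.L (rep j) :=
    { approval_eq := hPall
      pairwise_disjoint := hPL.pairwise_disjoint hP fun j => ⟨rep j, hrep j⟩
      ballot_eq := fun i j hi => hB.ballot_eq (hLA i) (hLA (rep j)) (hi.trans (hrep j).symm)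
      ballot_subset := fun j => hrep j ▸ hLA (rep j)
      card_ballot := fun j => E.ballot_card (rep j) }
  have hpos : ∀ j, 0 < nParty E (P j) := fun j =>
    card_pos.2 ⟨rep j, mem_filter.2 ⟨mem_univ _, hrep j⟩⟩
  rw [sCC_eq_sum_nParty hPall hP]
  refine sum_congr (filter_congr fun j _ => ?_) fun _ _ => rfl
  rw [hPB.inter_party_nonempty_iff_of_LVwin hanti hpos hW, lt_min_iff, and_iff_left j.isLt,
    ← Nat.ceilDiv_eq_add_pred_div, ← not_le (a := E.k ⌈/⌉ E.l),
    ceilDiv_le_iff_le_mul E.one_le_l, not_le, mul_comm]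
end

section
/- The CC-guarantee of Limited Voting is 0: for every committee size k ≥ 2 and every real ε > 0, there exist an election E = (N, C, k, l, A, L) with committee size k and a winning committee W ∈ LV(E) such that s_CC(A, W) < ε · max_{W' ⊆ C, |W'| = k} s_CC(A, W'). -/
open Finset

variable {V C : Type*} [Fintype V] [DecidableEq V] [Fintype C] [DecidableEq C]

/-- The CC-guarantee of Limited Voting is 0: for every committee size
`k ≥ 2` and every `ε > 0`, there are an election with committee size `k` and an
LV-winning committee `W` with `s_CC(A, W) < ε · max_{|W'| = k} s_CC(A, W')`. -/
theorem stmt5 :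
    ∀ k : ℕ, 2 ≤ k → ∀ ε : ℝ, 0 < ε →
      ∃ (nV nC : ℕ) (E : Election (Fin nV) (Fin nC)), E.k = k ∧
        ∃ W ∈ LVwin E, ∃ Wmax : Finset (Fin nC), Wmax.card = E.k ∧
          (∀ W' : Finset (Fin nC), W'.card = E.k → sCC E W' ≤ sCC E Wmax) ∧
          (sCC E W : ℝ) < ε * (sCC E Wmax : ℝ) := by
  intro k hk ε hε
  have hkpos : 0 < k := by omega
  refine ⟨k, 2 * k, ?_⟩
  have hlt1 : ∀ i : Fin k, i.val < 2 * k := fun i => by have := i.isLt; omega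
  have hlt2 : ∀ i : Fin k, k + i.val < 2 * k := fun i => by have := i.isLt; omega
  set A : Fin k → Finset (Fin (2 * k)) := fun i => {⟨k + i.val, hlt2 i⟩} with hA
  set L : Fin k → Finset (Fin (2 * k)) :=
    fun i => {⟨i.val, hlt1 i⟩, ⟨k + i.val, hlt2 i⟩} with hL
  have hne : ∀ i : Fin k,
      (⟨i.val, hlt1 i⟩ : Fin (2 * k)) ∉ ({⟨k + i.val, hlt2 i⟩} : Finset (Fin (2 * k))) := by
    intro i
    simp only [Finset.mem_singleton, Fin.ext_iff]
    omega
  let E : Election (Fin k) (Fin (2 * k)) :=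
    { k := k
      l := 2
      A := A
      L := L
      k_le_card := by simp [Fintype.card_fin]; omega
      one_le_l := by omega
      l_le_k := hk
      ballot_card := fun i => by
        rw [hL]
        rw [Finset.card_insert_of_notMem (hne i), Finset.card_singleton]
      ballot_sub_approval := fun i h => by
        rw [hA] at h
        simp at h
      approval_ssub_ballot := fun i _ => by
        rw [hA, hL]
        exact Finset.ssubset_insert (hne i) }
  have hEA : ∀ i, E.A i = A i := fun _ => rfl
  have hEL : ∀ i, E.L i = L i := fun _ => rfl
  -- every candidate has LV-score 1
  have hLV1 : ∀ c : Fin (2 * k), sLVc E c = 1 := by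
    intro c
    unfold sLVc
    rw [Finset.card_eq_one]
    by_cases hc : c.val < k
    · refine ⟨⟨c.val, hc⟩, ?_⟩
      ext i
      have hi := i.isLt
      simp only [Finset.mem_filter, Finset.mem_univ, true_and, hEL, hL,
        Finset.mem_insert, Finset.mem_singleton, Fin.ext_iff]
      omega
    · have hck : c.val - k < k := by have := c.isLt; omega
      refine ⟨⟨c.val - k, hck⟩, ?_⟩
      ext i
      have hi := i.isLt
      simp only [Finset.mem_filter, Finset.mem_univ, true_and, hEL, hL,
        Finset.mem_insert, Finset.mem_singleton, Fin.ext_iff]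
      omega
  have hsLV : ∀ X : Finset (Fin (2 * k)), sLV E X = X.card := by
    intro X
    unfold sLV
    simp [hLV1]
  -- the committees
  set W : Finset (Fin (2 * k)) :=
    Finset.image (fun i : Fin k => (⟨i.val, hlt1 i⟩ : Fin (2 * k))) Finset.univ with hW
  set Wmax : Finset (Fin (2 * k)) :=
    Finset.image (fun i : Fin k => (⟨k + i.val, hlt2 i⟩ : Fin (2 * k))) Finset.univ with hWmax
  have hWcard : W.card = k := by
    rw [hW, Finset.card_image_of_injective _ (fun a b hab => Fin.ext (by
      simpa [Fin.ext_iff] using hab)), Finset.card_univ, Fintype.card_fin]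
  have hWmaxcard : Wmax.card = k := by
    rw [hWmax, Finset.card_image_of_injective _ (fun a b hab => Fin.ext (by
      simpa [Fin.ext_iff] using hab)), Finset.card_univ, Fintype.card_fin]
  -- CC score of W is 0
  have hW0 : sCC E W = 0 := by
    unfold sCC
    rw [Finset.card_eq_zero, Finset.filter_eq_empty_iff]
    intro i _
    rintro ⟨x, hx⟩
    rw [Finset.mem_inter] at hx
    obtain ⟨hxW, hxA⟩ := hx
    rw [hEA, hA] at hxA
    rw [hW, Finset.mem_image] at hxW
    obtain ⟨j, _, hj⟩ := hxW
    rw [Finset.mem_singleton] at hxA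
    have h1 : x.val = j.val := by rw [← hj]
    have h2 : x.val = k + i.val := by rw [hxA]
    have := j.isLt
    omega
  -- CC score of Wmax is k
  have hWmaxk : sCC E Wmax = k := by
    unfold sCC
    have : ∀ i : Fin k, i ∈ Finset.univ → (Wmax ∩ E.A i).Nonempty := by
      intro i _
      refine ⟨⟨k + i.val, hlt2 i⟩, Finset.mem_inter.mpr ⟨?_, ?_⟩⟩
      · rw [hWmax, Finset.mem_image]
        exact ⟨i, Finset.mem_univ i, rfl⟩
      · rw [hEA, hA]
        exact Finset.mem_singleton_self _
    rw [Finset.filter_true_of_mem this, Finset.card_univ, Fintype.card_fin]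
  refine ⟨E, rfl, W, ⟨hWcard, fun W' h => by rw [hsLV, hsLV, h, hWcard]⟩,
    Wmax, hWmaxcard, ?_, ?_⟩
  · intro W' _
    rw [hWmaxk]
    calc sCC E W' ≤ Finset.univ.card := Finset.card_filter_le _ _
      _ = k := by rw [Finset.card_univ, Fintype.card_fin]
  · rw [hW0, hWmaxk]
    push_cast
    exact mul_pos hε (by exact_mod_cast hkpos)
end

section
/- The bound ⌈k/l⌉/k is tight for the CC-guarantee of Limited Voting on broadcasted party-list elections: for every committee size k, every ballot limit l with 1 ≤ l ≤ k, and every real ε > 0, there exist a broadcasted party-list election E with committee size k and ballot limit l and a winning committee W ∈ LV(E) such that s_CC(A, W) < (⌈k/l⌉/k + ε) · max_{W' ⊆ C, |W'| = k} s_CC(A, W'). -/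
open Finset

variable {V C : Type*} [Fintype V] [DecidableEq V] [Fintype C] [DecidableEq C]

/-!
Give each of `k` voters a party of its own with `l` candidates, and let every ballot be the
voter's whole party. Then every candidate has LV-score `1`, so every `k` candidates form an
LV-winning committee. Numbering the candidates party by party (candidate `c` belongs to party
`c / l`), the first `k` candidates meet only `⌈k/l⌉` parties, while one candidate from each party
represents all `k` voters.
-/

namespace Election

variable {V C : Type*} [Fintype V] [DecidableEq V] [Fintype C] [DecidableEq C]

def ofParty (party : C → V) (k l : ℕ) (hk : k ≤ Fintype.card C) (hl : 1 ≤ l) (hlk : l ≤ k)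
    (hparty : ∀ i, #{c | party c = i} = l) : Election V C where
  k := k
  l := l
  A i := {c | party c = i}
  L i := {c | party c = i}
  k_le_card := hk
  one_le_l := hl
  l_le_k := hlk
  ballot_card := hparty
  ballot_sub_approval _ _ := subset_rfl
  approval_ssub_ballot i h := absurd h (hparty i).not_lt

section ofParty

variable {party : C → V} {k l : ℕ} {hk : k ≤ Fintype.card C} {hl : 1 ≤ l} {hlk : l ≤ k}
  {hparty : ∀ i, #{c | party c = i} = l}

local notation "𝓔" => ofParty party k l hk hl hlk hparty

theorem ofParty_partyList : PartyList 𝓔 := by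
  refine ⟨fun i => card_pos.mp (hl.trans_eq (hparty i).symm), fun i j => ?_⟩
  rcases eq_or_ne i j with rfl | hij
  · exact .inl rfl
  · refine .inr (eq_empty_of_forall_notMem fun c hc => hij ?_)
    simp only [ofParty, mem_inter, mem_filter, mem_univ, true_and] at hc
    exact hc.1.symm.trans hc.2

theorem ofParty_broadcasted : Broadcasted 𝓔 :=
  ⟨fun c => Fintype.equivFin C c, Fin.val_injective.comp (Fintype.equivFin C).injective,
    fun _ _ _ _ hc' _ hc'L => absurd hc' hc'L⟩

theorem sLVc_ofParty (c : C) : sLVc 𝓔 c = 1 := by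
  rw [sLVc, card_eq_one]
  exact ⟨party c, by ext i; simp [ofParty, eq_comm]⟩

theorem sLV_ofParty (W : Finset C) : sLV 𝓔 W = #W := by
  simp [sLV, sLVc_ofParty]

theorem mem_LVwin_ofParty {W : Finset C} (hW : #W = k) : W ∈ LVwin 𝓔 :=
  ⟨hW, fun W' hW' => by rw [sLV_ofParty, sLV_ofParty, hW', hW]; exact le_rfl⟩

theorem sCC_ofParty (W : Finset C) : sCC 𝓔 W = #(W.image party) := by
  rw [sCC]
  congr 1
  ext i
  simp [ofParty, Finset.Nonempty]

theorem exists_sCC_ofParty_eq_card :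
    ∃ W : Finset C, #W = Fintype.card V ∧ sCC 𝓔 W = Fintype.card V := by
  have hne : ∀ i, ∃ c, party c = i := fun i => by
    obtain ⟨c, hc⟩ := card_pos.mp (hl.trans_eq (hparty i).symm)
    exact ⟨c, by simpa using hc⟩
  choose s hs using hne
  have hinj : Function.Injective s := Function.LeftInverse.injective hs
  refine ⟨univ.image s, by rw [card_image_of_injective _ hinj, card_univ], ?_⟩
  rw [sCC_ofParty, image_image, show party ∘ s = id from funext hs, image_id, card_univ]

end ofParty

theorem sCC_le_card (E : Election V C) (W : Finset C) : sCC E W ≤ Fintype.card V :=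
  card_filter_le _ _

end Election

theorem Nat.image_div_range {l : ℕ} (hl : 0 < l) (k : ℕ) :
    (range k).image (· / l) = range (k ⌈/⌉ l) := by
  ext m
  simp only [mem_image, mem_range]
  rw [← not_le, ceilDiv_le_iff_le_mul hl, not_le]
  constructor
  · rintro ⟨a, ha, rfl⟩
    exact lt_of_le_of_lt (Nat.mul_div_le a l) ha
  · intro h
    exact ⟨l * m, h, by rw [Nat.mul_div_cancel_left m hl]⟩

theorem Fin.card_filter_divNat_eq {m n : ℕ} (i : Fin m) :
    #{c : Fin (m * n) | c.divNat = i} = n := by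
  rw [← card_map finProdFinEquiv.symm.toEmbedding, map_filter]
  have hfst (x : Fin m × Fin n) : (finProdFinEquiv x).divNat = x.1 :=
    congrArg Prod.fst (finProdFinEquiv.symm_apply_apply x)
  simp only [Equiv.symm_symm, Function.comp_apply, map_univ_equiv, hfst]
  rw [← univ_product_univ, filter_product_left (· = i), card_product, filter_eq',
    if_pos (mem_univ i), card_singleton, card_univ, Fintype.card_fin, one_mul]

theorem Fin.card_image_divNat_attachFin_range {k l : ℕ} (hl : 0 < l)
    (h : ∀ a ∈ range k, a < k * l) : #(((range k).attachFin h).image Fin.divNat) = k ⌈/⌉ l := by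
  rw [← card_image_of_injective _ Fin.val_injective, image_image,
    show Fin.val ∘ Fin.divNat = (· / l) ∘ Fin.val from rfl, ← image_image, image_val_attachFin,
    Nat.image_div_range hl, card_range]

/-- The bound `⌈k/l⌉/k` is tight for the CC-guarantee of LV on broadcasted
party-list elections: for all `k`, `l` with `1 ≤ l ≤ k` and every `ε > 0`, there are a
broadcasted party-list election with committee size `k` and ballot limit `l` and an
LV-winning committee `W` with
`s_CC(A, W) < (⌈k/l⌉/k + ε) · max_{|W'| = k} s_CC(A, W')`. -/
theorem stmt7 :
    ∀ k l : ℕ, 1 ≤ l → l ≤ k → ∀ ε : ℝ, 0 < ε →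
      ∃ (nV nC : ℕ) (E : Election (Fin nV) (Fin nC)),
        E.k = k ∧ E.l = l ∧ PartyList E ∧ Broadcasted E ∧
        ∃ W ∈ LVwin E, ∃ Wmax : Finset (Fin nC), Wmax.card = E.k ∧
          (∀ W' : Finset (Fin nC), W'.card = E.k → sCC E W' ≤ sCC E Wmax) ∧
          (sCC E W : ℝ) < ((((k + l - 1) / l : ℕ) : ℝ) / (k : ℝ) + ε) * (sCC E Wmax : ℝ) := by
  intro k l hl hlk ε hε
  have hkl : k ≤ k * l := Nat.le_mul_of_pos_right k hl
  have hk : k ≤ Fintype.card (Fin (k * l)) := (Fintype.card_fin _).symm ▸ hkl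
  have hfirst : ∀ a ∈ range k, a < k * l := fun a ha => (mem_range.mp ha).trans_le hkl
  set E := Election.ofParty Fin.divNat k l hk hl hlk Fin.card_filter_divNat_eq
  obtain ⟨Wmax, hWmax_card, hWmax⟩ :
      ∃ W, #W = Fintype.card (Fin k) ∧ sCC E W = Fintype.card (Fin k) :=
    Election.exists_sCC_ofParty_eq_card
  rw [Fintype.card_fin] at hWmax_card hWmax
  refine ⟨k, k * l, E, rfl, rfl, Election.ofParty_partyList, Election.ofParty_broadcasted,
    (range k).attachFin hfirst,
    Election.mem_LVwin_ofParty ((card_attachFin _ hfirst).trans (card_range k)), Wmax, hWmax_card,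
    fun W' _ => hWmax.symm ▸ (E.sCC_le_card W').trans_eq (Fintype.card_fin k), ?_⟩
  rw [Election.sCC_ofParty, Fin.card_image_divNat_attachFin_range hl, hWmax,
    ← Nat.ceilDiv_eq_add_pred_div]
  have hk0 : (0 : ℝ) < k := by exact_mod_cast hl.trans hlk
  rw [add_mul, div_mul_cancel₀ _ hk0.ne']
  exact lt_add_of_pos_right _ (mul_pos hε hk0)
end

section
/- Consider any broadcasted party-list election E = (N, C, k, l, A, L) with parties P_1, …, P_g whose popularities are strictly decreasing (n_1 > n_2 > … > n_g), in which |P_1| ≥ k, every party has at least l candidates (|P_i| ≥ l for all i), and g · l ≥ k. Then the PAV-improvement of LV over AV equals IMP_PAV(E) = (Σ_{i=1}^{⌊k/l⌋} n_i · H_l + n_{⌈k/l⌉} · H_{k mod l}) / (n_1 · H_k), where the term n_{⌈k/l⌉} · H_{k mod l} is taken to be 0 when l divides k. -/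
open Finset

variable {V C : Type*} [Fintype V] [DecidableEq V] [Fintype C] [DecidableEq C]

/-- The harmonic number `H_t = Σ_{j=1}^t 1/j` (with `H_0 = 0`). -/
noncomputable def harm (t : ℕ) : ℝ := ∑ j ∈ Finset.range t, (1 : ℝ) / (j + 1)

/-- The PAV-score of a committee. -/
noncomputable def sPAV (E : Election V C) (W : Finset C) : ℝ :=
  ∑ i : V, harm ((W ∩ E.A i).card)

/-!
Every party has at least `l` candidates, so each ballot lies inside its voter's party, and two
voters of the same party cannot cast different ballots without ordering two candidates in both
ways; hence party `j` casts a single ballot `B j`. The LV- and AV-scores of a committee `W` are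
then `∑ j, n j * #(W ∩ B j)` and `∑ j, n j * #(W ∩ P j)`, weighted hits in disjoint blocks
with strictly decreasing weights. Such a score is maximized exactly by the greedy profile `y`,
which fills the blocks in order of popularity (`min l (k - j * l)` for LV, `k` in the first block
for AV): for any other feasible profile `x` and the pivot block `p` where `y` stops being full,
`∑ w (y - x) = ∑ (w i - w p) * (y i - x i) + w p * ∑ (y - x)` is a sum of nonnegative terms, one
of them positive. So all LV-winners, and all AV-winners, meet every party in the same number of
candidates and share one PAV-score, which gives the ratio.
-/

open Function

section Crossing

lemma sum_mul_sub_sum_mul_eq {R ι : Type*} [CommRing R] [Fintype ι] (w x y : ι → R) (p : ι) :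
    ∑ i, w i * y i - ∑ i, w i * x i =
      ∑ i, (w i - w p) * (y i - x i) + w p * (∑ i, y i - ∑ i, x i) := by
  simp only [mul_sub, sub_mul, Finset.sum_sub_distrib, ← Finset.mul_sum]
  ring

variable {R ι : Type*} [CommRing R] [LinearOrder R] [IsStrictOrderedRing R] [LinearOrder ι]
  {w x y : ι → R} {p : ι}

lemma pivot_term_nonneg (hw : StrictAnti w) (hlt : ∀ i < p, x i ≤ y i)
    (hgt : ∀ i, p < i → y i ≤ x i) (i : ι) : 0 ≤ (w i - w p) * (y i - x i) := by
  rcases lt_trichotomy i p with h | rfl | h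
  · exact mul_nonneg (sub_nonneg.2 (hw h).le) (sub_nonneg.2 (hlt i h))
  · simp
  · exact mul_nonneg_of_nonpos_of_nonpos (sub_nonpos.2 (hw h).le) (sub_nonpos.2 (hgt i h))

variable [Fintype ι]

theorem sum_mul_le_sum_mul_of_crossing (hw : StrictAnti w) (hp : 0 ≤ w p)
    (hsum : ∑ i, x i ≤ ∑ i, y i) (hlt : ∀ i < p, x i ≤ y i) (hgt : ∀ i, p < i → y i ≤ x i) :
    ∑ i, w i * x i ≤ ∑ i, w i * y i := by
  have hsplit := sum_mul_sub_sum_mul_eq w x y p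
  have h1 : 0 ≤ ∑ i, (w i - w p) * (y i - x i) :=
    Finset.sum_nonneg fun i _ => pivot_term_nonneg hw hlt hgt i
  have h2 : 0 ≤ w p * (∑ i, y i - ∑ i, x i) := mul_nonneg hp (sub_nonneg.2 hsum)
  linarith

theorem sum_mul_lt_sum_mul_of_crossing (hw : StrictAnti w) (hp : 0 < w p)
    (hsum : ∑ i, x i ≤ ∑ i, y i) (hlt : ∀ i < p, x i ≤ y i) (hgt : ∀ i, p < i → y i ≤ x i)
    (hne : x ≠ y) : ∑ i, w i * x i < ∑ i, w i * y i := by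
  have hsplit := sum_mul_sub_sum_mul_eq w x y p
  have hterms : ∀ i ∈ univ, 0 ≤ (w i - w p) * (y i - x i) :=
    fun i _ => pivot_term_nonneg hw hlt hgt i
  have hsum' : 0 ≤ ∑ i, y i - ∑ i, x i := sub_nonneg.2 hsum
  by_cases hoff : ∃ i ≠ p, x i ≠ y i
  · obtain ⟨i, hip, hi⟩ := hoff
    have hpos : 0 < (w i - w p) * (y i - x i) :=
      (hterms i (mem_univ i)).lt_of_ne' <|
        mul_ne_zero (sub_ne_zero.2 (hw.injective.ne hip)) (sub_ne_zero.2 hi.symm)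
    have h1 : 0 < ∑ i, (w i - w p) * (y i - x i) :=
      Finset.sum_pos' hterms ⟨i, mem_univ i, hpos⟩
    nlinarith
  · push Not at hoff
    have hxp : x p ≠ y p := fun h => hne (funext fun i => if hi : i = p then hi ▸ h else hoff i hi)
    have hdiff : ∑ i, y i - ∑ i, x i = y p - x p := by
      rw [← Finset.sum_sub_distrib, Fintype.sum_eq_single p fun i hi => by rw [hoff i hi, sub_self]]
    have h1 : 0 ≤ ∑ i, (w i - w p) * (y i - x i) := Finset.sum_nonneg hterms
    have h2 : 0 < ∑ i, y i - ∑ i, x i :=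
      hsum'.lt_of_ne' (by rw [hdiff]; exact sub_ne_zero.2 hxp.symm)
    nlinarith

end Crossing

section Hits

variable {α ι : Type*} [DecidableEq α] [Fintype ι] {S : ι → Finset α}

lemma sum_card_filter_mem (W : Finset α) (G : ι → Finset α) :
    ∑ c ∈ W, #{i | c ∈ G i} = ∑ i, #(W ∩ G i) := by
  simp only [card_filter]
  rw [sum_comm]
  simp only [← card_filter, filter_mem_eq_inter]

lemma sum_card_inter_le_card (hS : Pairwise (Disjoint on S)) (W : Finset α) :
    ∑ j, #(W ∩ S j) ≤ #W := by
  rw [← card_biUnion fun j _ j' _ h => (hS h).mono inter_subset_right inter_subset_right]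
  exact card_le_card (biUnion_subset.2 fun j _ => inter_subset_left)

lemma exists_card_inter_eq (hS : Pairwise (Disjoint on S)) (y : ι → ℕ)
    (hy : ∀ j, y j ≤ #(S j)) : ∃ W : Finset α, #W = ∑ j, y j ∧ ∀ j, #(W ∩ S j) = y j := by
  choose T hTS hTcard using fun j => exists_subset_card_eq (hy j)
  have hT : (↑(univ : Finset ι) : Set ι).PairwiseDisjoint T :=
    fun j _ j' _ h => (hS h).mono (hTS j) (hTS j')
  refine ⟨univ.biUnion T, by rw [card_biUnion hT]; simp only [hTcard], fun j => ?_⟩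
  suffices univ.biUnion T ∩ S j = T j by rw [this, hTcard]
  ext c
  simp only [mem_inter, mem_biUnion, mem_univ, true_and]
  constructor
  · rintro ⟨⟨j', hc⟩, hcj⟩
    obtain rfl : j' = j := by_contra fun h => disjoint_left.1 (hS h) (hTS j' hc) hcj
    exact hc
  · exact fun hc => ⟨⟨j, hc⟩, hTS j hc⟩

lemma card_inter_eq_of_subset {B : ι → Finset α} (hS : Pairwise (Disjoint on S))
    (hBS : ∀ j, B j ⊆ S j) {W : Finset α} {y : ι → ℕ} (hW : #W = ∑ j, y j)
    (hB : ∀ j, #(W ∩ B j) = y j) (j : ι) : #(W ∩ S j) = y j := by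
  have hle : ∀ j ∈ univ, #(W ∩ B j) ≤ #(W ∩ S j) :=
    fun j _ => card_le_card (inter_subset_inter_left (hBS j))
  have hsum : ∑ j, #(W ∩ B j) = ∑ j, #(W ∩ S j) :=
    le_antisymm (sum_le_sum hle) (by simpa only [hB, ← hW] using sum_card_inter_le_card hS W)
  rw [← hB, ((sum_eq_sum_iff_of_le hle).1 hsum j (mem_univ j))]

variable [LinearOrder ι] {w y : ι → ℕ} {p : ι} {k : ℕ}

lemma sum_mul_card_inter_le (hS : Pairwise (Disjoint on S)) (hw : StrictAnti w)
    (hk : ∑ j, y j = k) (hlt : ∀ j < p, #(S j) ≤ y j) (hgt : ∀ j, p < j → y j = 0)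
    {W : Finset α} (hW : #W = k) :
    ∑ j, w j * #(W ∩ S j) ≤ ∑ j, w j * y j := by
  have := sum_mul_le_sum_mul_of_crossing (x := fun j => (#(W ∩ S j) : ℤ)) (y := fun j => (y j : ℤ))
    (Nat.strictMono_cast.comp_strictAnti hw) (Nat.cast_nonneg (w p))
    (by exact_mod_cast (sum_card_inter_le_card hS W).trans (hW.trans hk.symm).le)
    (fun j hj => by exact_mod_cast (card_le_card inter_subset_right).trans (hlt j hj))
    (fun j hj => by simp [hgt j hj])
  simp only [comp_apply] at this
  exact_mod_cast this

lemma sum_mul_card_inter_lt (hS : Pairwise (Disjoint on S)) (hw : StrictAnti w) (hp : 0 < w p)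
    (hk : ∑ j, y j = k) (hlt : ∀ j < p, #(S j) ≤ y j) (hgt : ∀ j, p < j → y j = 0)
    {W : Finset α} (hW : #W = k) (hne : ∃ j, #(W ∩ S j) ≠ y j) :
    ∑ j, w j * #(W ∩ S j) < ∑ j, w j * y j := by
  obtain ⟨j₀, hj₀⟩ := hne
  have := sum_mul_lt_sum_mul_of_crossing (x := fun j => (#(W ∩ S j) : ℤ)) (y := fun j => (y j : ℤ))
    (Nat.strictMono_cast.comp_strictAnti hw) (Nat.cast_pos.2 hp)
    (by exact_mod_cast (sum_card_inter_le_card hS W).trans (hW.trans hk.symm).le)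
    (fun j hj => by exact_mod_cast (card_le_card inter_subset_right).trans (hlt j hj))
    (fun j hj => by simp [hgt j hj]) (fun h => hj₀ (by exact_mod_cast congr_fun h j₀))
  simp only [comp_apply] at this
  exact_mod_cast this

theorem setOf_isMax_eq (hS : Pairwise (Disjoint on S)) (hw : StrictAnti w)
    (hp : 0 < w p) (hy : ∀ j, y j ≤ #(S j)) (hk : ∑ j, y j = k)
    (hlt : ∀ j < p, #(S j) ≤ y j) (hgt : ∀ j, p < j → y j = 0) {f : Finset α → ℕ}
    (hf : ∀ W, f W = ∑ j, w j * #(W ∩ S j)) :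
    {W | #W = k ∧ ∀ W' : Finset α, #W' = k → f W' ≤ f W} =
      {W | #W = k ∧ ∀ j, #(W ∩ S j) = y j} := by
  ext W
  refine and_congr_right fun hW => ?_
  simp only [hf]
  refine ⟨fun hmax => ?_, fun hW' W' hW'k => ?_⟩
  · obtain ⟨Wy, hWyk, hWy⟩ := exists_card_inter_eq hS y hy
    by_contra! hne
    have := hmax Wy (hWyk.trans hk)
    simp only [hWy] at this
    exact (sum_mul_card_inter_lt hS hw hp hk hlt hgt hW hne).not_ge this
  · simpa only [hW'] using sum_mul_card_inter_le hS hw hk hlt hgt hW'k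

end Hits

lemma sum_range_min_sub_mul (l k m : ℕ) :
    ∑ j ∈ range m, min l (k - j * l) = min (m * l) k := by
  induction m with
  | zero => simp
  | succ m ih =>
    rw [sum_range_succ, ih, add_mul, one_mul]
    omega

lemma mul_lt_and_le_mul_of_eq_ceil {l k c : ℕ} (hl : 0 < l) (hc : c + 1 = (k + l - 1) / l) :
    c * l < k ∧ k ≤ (c + 1) * l := by
  have h₁ := (Nat.le_div_iff_mul_le hl).1 hc.le
  have h₂ : k + l - 1 < (c + 2) * l := (Nat.div_lt_iff_lt_mul hl).1 (by omega)
  simp only [add_mul, one_mul] at h₁ h₂ ⊢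
  omega

lemma min_sub_mul_eq_ite {l : ℕ} (hl : 0 < l) (k j : ℕ) :
    min l (k - j * l) = if j < k / l then l else if j = k / l then k % l else 0 := by
  have hk := Nat.div_add_mod' k l
  have hr := Nat.mod_lt k hl
  split_ifs with h₁ h₂
  · have := Nat.mul_le_mul_right l (Nat.succ_le_of_lt h₁)
    simp only [Nat.succ_mul] at this
    omega
  · subst h₂; omega
  · have := Nat.mul_le_mul_right l (Nat.succ_le_of_lt (lt_of_le_of_ne (not_lt.1 h₁) (Ne.symm h₂)))
    simp only [Nat.succ_mul] at this
    omega

lemma harm_zero : harm 0 = 0 := by simp [harm]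

lemma sum_mul_harm_min_sub_mul {g l k : ℕ} (hl : 0 < l) (n : Fin g → ℝ) (jc : Fin g)
    (hjc : (jc : ℕ) * l < k ∧ k ≤ ((jc : ℕ) + 1) * l) :
    ∑ j, n j * harm (min l (k - j * l)) =
      ∑ j ∈ univ.filter (fun j : Fin g => (j : ℕ) < k / l), n j * harm l +
        n jc * harm (k % l) := by
  simp only [min_sub_mul_eq_ite hl]
  rw [← sum_filter_add_sum_filter_not univ (fun j : Fin g => (j : ℕ) < k / l)]
  congr 1
  · exact sum_congr rfl fun j hj => by rw [if_pos (mem_filter.1 hj).2]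
  · rcases Nat.eq_zero_or_pos (k % l) with hr | hr
    · refine (sum_eq_zero fun j hj => ?_).trans (by rw [hr, harm_zero, mul_zero])
      rw [if_neg (mem_filter.1 hj).2, hr]; split_ifs <;> simp [harm_zero]
    · have hq : (jc : ℕ) = k / l := by
        have hk := Nat.div_add_mod' k l
        have hrl := Nat.mod_lt k hl
        have h₁ : k / l < jc + 1 := Nat.lt_of_mul_lt_mul_right (a := l) (by omega)
        have h₂ : (jc : ℕ) < k / l + 1 :=
          Nat.lt_of_mul_lt_mul_right (a := l) (by rw [add_mul, one_mul]; omega)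
        omega
      rw [sum_eq_single_of_mem jc (by simp [hq]) fun j hj hne => ?_]
      · rw [if_neg (by omega), if_pos hq]
      · rw [if_neg (mem_filter.1 hj).2, if_neg fun h => hne (Fin.ext (h.trans hq.symm)),
          harm_zero, mul_zero]

section PartyScores

variable {E : Election V C}

lemma ballot_eq_of_approval_eq (hB : Broadcasted E) {i i' : V} (hA : E.A i = E.A i')
    (hl : E.l ≤ #(E.A i)) : E.L i = E.L i' := by
  obtain ⟨f, -, hf⟩ := hB
  have hsub : E.L i ⊆ E.A i := E.ballot_sub_approval i hl
  have hsub' : E.L i' ⊆ E.A i := hA ▸ E.ballot_sub_approval i' (hA ▸ hl)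
  refine eq_of_subset_of_card_le (fun c hc => ?_) (by rw [E.ballot_card, E.ballot_card])
  by_contra hc'
  obtain ⟨c', hc'L, hc'L'⟩ : ∃ c' ∈ E.L i', c' ∉ E.L i := by
    by_contra! h
    exact hc' ((eq_of_subset_of_card_le h (by rw [E.ballot_card, E.ballot_card])) ▸ hc)
  -- ballot `i` puts `c` before `c'` in the broadcasting order, ballot `i'` puts it after
  have h₁ := hf i c c' (hsub hc) (hsub' hc'L) hc hc'L'
  have h₂ := hf i' c' c (hA ▸ hsub' hc'L) (hA ▸ hsub hc) hc'L hc'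
  omega

lemma nParty_pos {i : V} {S : Finset C} (h : E.A i = S) : 0 < nParty E S :=
  card_pos.2 ⟨i, mem_filter.2 ⟨mem_univ i, h⟩⟩

variable {ι : Type*} {P : ι → Finset C}

lemma pairwise_disjoint_of_partyList (hPL : PartyList E) {rep : ι → V}
    (hrep : ∀ j, E.A (rep j) = P j) (hP : Injective P) : Pairwise (Disjoint on P) := by
  intro j j' h
  rw [Function.onFun, disjoint_iff_inter_eq_empty, ← hrep, ← hrep]
  exact (hPL.2 _ _).resolve_left (by rw [hrep, hrep]; exact hP.ne h)

variable [Fintype ι] [DecidableEq ι] {party : V → ι}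

lemma sum_comp_party {M : Type*} [AddCommMonoid M] (hP : Injective P)
    (hparty : ∀ i, E.A i = P (party i)) (φ : ι → M) :
    ∑ i, φ (party i) = ∑ j, nParty E (P j) • φ j := by
  rw [← sum_fiberwise univ party]
  refine sum_congr rfl fun j _ => ?_
  rw [sum_congr rfl fun i hi => by rw [(mem_filter.1 hi).2], sum_const, nParty]
  congr 2
  ext i
  simp only [hparty, hP.eq_iff]

lemma sAV_eq (hP : Injective P) (hparty : ∀ i, E.A i = P (party i)) (W : Finset C) :
    sAV E W = ∑ j, nParty E (P j) * #(W ∩ P j) := by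
  simp only [sAV, sAVc, sum_card_filter_mem, hparty, ← smul_eq_mul]
  exact sum_comp_party hP hparty fun j => #(W ∩ P j)

lemma sLV_eq (hP : Injective P) (hparty : ∀ i, E.A i = P (party i)) {B : ι → Finset C}
    (hLB : ∀ i, E.L i = B (party i)) (W : Finset C) :
    sLV E W = ∑ j, nParty E (P j) * #(W ∩ B j) := by
  simp only [sLV, sLVc, sum_card_filter_mem, hLB, ← smul_eq_mul]
  exact sum_comp_party hP hparty fun j => #(W ∩ B j)

lemma sPAV_eq (hP : Injective P) (hparty : ∀ i, E.A i = P (party i)) (W : Finset C) :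
    sPAV E W = ∑ j, (nParty E (P j) : ℝ) * harm #(W ∩ P j) := by
  simp only [sPAV, hparty, ← nsmul_eq_mul]
  exact sum_comp_party hP hparty fun j => harm #(W ∩ P j)

lemma sPAV_image_eq (hP : Injective P) (hparty : ∀ i, E.A i = P (party i))
    {s : Set (Finset C)} (hs : s.Nonempty) {y : ι → ℕ} (hy : ∀ W ∈ s, ∀ j, #(W ∩ P j) = y j) :
    sPAV E '' s = {∑ j, (nParty E (P j) : ℝ) * harm (y j)} := by
  rw [Set.image_congr (g := fun _ => ∑ j, (nParty E (P j) : ℝ) * harm (y j))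
    fun W hW => by simp only [sPAV_eq hP hparty, hy W hW]]
  exact hs.image_const _

end PartyScores

section Winners

variable {E : Election V C}

lemma sPAV_image_LVwin (hB : Broadcasted E) {g : ℕ} {P : Fin g → Finset C} {party : V → Fin g}
    {rep : Fin g → V} (hanti : StrictAnti fun j => nParty E (P j))
    (hPdisj : Pairwise (Disjoint on P)) (hparty : ∀ i, E.A i = P (party i))
    (hrep : ∀ j, E.A (rep j) = P j) (hPl : ∀ j, E.l ≤ #(P j)) (hgl : E.k ≤ g * E.l) {jc : Fin g}
    (hjc : (jc : ℕ) * E.l < E.k ∧ E.k ≤ ((jc : ℕ) + 1) * E.l) :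
    sPAV E '' LVwin E = {∑ j, (nParty E (P j) : ℝ) * harm (min E.l (E.k - j * E.l))} := by
  have hP : Injective P := Injective.of_comp (f := nParty E) hanti.injective
  set B : Fin g → Finset C := fun j => E.L (rep j)
  have hBP : ∀ j, B j ⊆ P j := fun j => hrep j ▸ E.ballot_sub_approval _ (hrep j ▸ hPl j)
  have hLB : ∀ i, E.L i = B (party i) := fun i =>
    ballot_eq_of_approval_eq hB ((hparty i).trans (hrep _).symm) (hparty i ▸ hPl _)
  have hBdisj : Pairwise (Disjoint on B) := fun j j' h => (hPdisj h).mono (hBP j) (hBP j')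
  set y : Fin g → ℕ := fun j => min E.l (E.k - j * E.l)
  have hy : ∀ j, y j ≤ #(B j) := fun j => (E.ballot_card _).symm ▸ min_le_left _ _
  have hk : ∑ j, y j = E.k := by
    rw [Fin.sum_univ_eq_sum_range (fun j => min E.l (E.k - j * E.l)), sum_range_min_sub_mul,
      min_eq_right hgl]
  have hlt : ∀ j < jc, #(B j) ≤ y j := fun j hj => by
    have : ((j : ℕ) + 1) * E.l ≤ jc * E.l := Nat.mul_le_mul_right _ (Fin.lt_def.1 hj)
    rw [add_one_mul] at this
    simp only [B, y, E.ballot_card]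
    omega
  have hgt : ∀ j, jc < j → y j = 0 := fun j hj => by
    have : ((jc : ℕ) + 1) * E.l ≤ j * E.l := Nat.mul_le_mul_right _ (Fin.lt_def.1 hj)
    simp only [y]
    omega
  have hLVwin : LVwin E = {W | #W = E.k ∧ ∀ j, #(W ∩ B j) = y j} :=
    setOf_isMax_eq hBdisj hanti (nParty_pos (hrep jc)) hy hk hlt hgt (sLV_eq hP hparty hLB)
  obtain ⟨W, hWk, hWy⟩ := exists_card_inter_eq hBdisj y hy
  refine sPAV_image_eq hP hparty ⟨W, hLVwin ▸ ⟨hWk.trans hk, hWy⟩⟩ fun W hW => ?_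
  rw [hLVwin] at hW
  exact card_inter_eq_of_subset hPdisj hBP (hW.1.trans hk.symm) hW.2

lemma sPAV_image_AVwin {ι : Type*} [Fintype ι] [LinearOrder ι] {P : ι → Finset C}
    {party : V → ι} {rep : ι → V} (hanti : StrictAnti fun j => nParty E (P j))
    (hPdisj : Pairwise (Disjoint on P)) (hparty : ∀ i, E.A i = P (party i))
    (hrep : ∀ j, E.A (rep j) = P j) {j₀ : ι} (hj₀ : IsBot j₀) (hP₀ : E.k ≤ #(P j₀)) :
    sPAV E '' AVwin E = {(nParty E (P j₀) : ℝ) * harm E.k} := by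
  have hP : Injective P := Injective.of_comp (f := nParty E) hanti.injective
  set y : ι → ℕ := fun j => if j = j₀ then E.k else 0
  have hy : ∀ j, y j ≤ #(P j) := fun j => by
    by_cases h : j = j₀ <;> simp [y, h, hP₀]
  have hk : ∑ j, y j = E.k := by simp [y]
  have hAVwin : AVwin E = {W | #W = E.k ∧ ∀ j, #(W ∩ P j) = y j} :=
    setOf_isMax_eq hPdisj hanti (nParty_pos (hrep j₀)) hy hk
      (fun j hj => absurd hj (hj₀ j).not_gt) (fun j hj => if_neg hj.ne') (sAV_eq hP hparty)
  obtain ⟨W, hWk, hWy⟩ := exists_card_inter_eq hPdisj y hy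
  rw [sPAV_image_eq hP hparty ⟨W, hAVwin ▸ ⟨hWk.trans hk, hWy⟩⟩ fun W hW => (hAVwin ▸ hW).2,
    Fintype.sum_eq_single j₀ fun j hj => by simp only [y, if_neg hj, harm_zero, mul_zero]]
  simp only [y, if_pos rfl]

end Winners

/-- In a broadcasted party-list election with strictly decreasing party
popularities, `|P_1| ≥ k`, every party having at least `l` candidates, and `g · l ≥ k`,
the PAV-improvement of LV over AV equals
`(Σ_{i=1}^{⌊k/l⌋} n_i · H_l + n_{⌈k/l⌉} · H_{k mod l}) / (n_1 · H_k)`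
(the second summand being 0 when `l ∣ k`, since `H_0 = 0`).
Here `jc` denotes the party with (1-based) index `⌈k/l⌉`. -/
theorem stmt10 (E : Election V C) (hPL : PartyList E) (hB : Broadcasted E)
    (g : ℕ) (hg : 0 < g) (P : Fin g → Finset C)
    (hPall : ∀ i : V, ∃ j, E.A i = P j)
    (hPrep : ∀ j, ∃ i : V, E.A i = P j)
    (hanti : ∀ j j' : Fin g, j < j' → nParty E (P j') < nParty E (P j))
    (hPl : ∀ j, E.l ≤ (P j).card)
    (hP1 : E.k ≤ (P ⟨0, hg⟩).card)
    (hgl : E.k ≤ g * E.l)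
    (jc : Fin g) (hjc : (jc : ℕ) + 1 = (E.k + E.l - 1) / E.l) :
    sInf (sPAV E '' LVwin E) / sSup (sPAV E '' AVwin E) =
      ((∑ j ∈ univ.filter (fun j : Fin g => (j : ℕ) < E.k / E.l),
          (nParty E (P j) : ℝ) * harm E.l) +
        (nParty E (P jc) : ℝ) * harm (E.k % E.l)) /
      ((nParty E (P ⟨0, hg⟩) : ℝ) * harm E.k) := by
  choose party hparty using hPall
  choose rep hrep using hPrep
  have hn : StrictAnti fun j => nParty E (P j) := fun j j' h => hanti j j' h
  have hPdisj :=
    pairwise_disjoint_of_partyList hPL hrep (Injective.of_comp (f := nParty E) hn.injective)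
  have hjc_bounds := mul_lt_and_le_mul_of_eq_ceil E.one_le_l hjc
  rw [sPAV_image_LVwin hB hn hPdisj hparty hrep hPl hgl hjc_bounds,
    sPAV_image_AVwin hn hPdisj hparty hrep (fun j => Fin.le_def.2 (Nat.zero_le _)) hP1,
    csInf_singleton, csSup_singleton, sum_mul_harm_min_sub_mul E.one_le_l _ jc hjc_bounds]
end

section
/- In any broadcasted LV-game in which every party has at least l candidates (|P_i| ≥ l for all i), any strategy profile S = (s_1, …, s_g) in which each party's ballot consists only of its own candidates (s_i ⊆ P_i for all i) is a pure strategy Nash equilibrium: for every party P_i and every alternative ballot s'_i ⊆ C with |s'_i| = l, U_i(s_1, …, s'_i, …, s_g) ≤ U_i(S). -/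
open Finset

/-- A party-list election frame `F = (N, C, k, l, A)`: voters form the finite type `V`,
candidates the finite type `C`, `k` is the committee size, `l` the ballot limit, and
`A` is a party-list approval profile. -/
structure Frame (V C : Type*) [Fintype V] [DecidableEq V] [Fintype C] [DecidableEq C] where
  k : ℕ
  l : ℕ
  A : V → Finset C
  k_le_card : k ≤ Fintype.card C
  one_le_l : 1 ≤ l
  l_le_k : l ≤ k
  A_nonempty : ∀ i, (A i).Nonempty
  A_partylist : ∀ i j : V, A i = A j ∨ A i ∩ A j = ∅

variable {V C : Type*} [Fintype V] [DecidableEq V] [Fintype C] [DecidableEq C]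

/-- A strategy profile assigns to every voter a ballot; the vote count of a candidate
is the number of voters whose ballot contains it. -/
def voteCount (σ : V → Finset C) (c : C) : ℕ := (univ.filter fun i => c ∈ σ i).card

/-- The total vote count of a committee. -/
def committeeScore (σ : V → Finset C) (W : Finset C) : ℕ := ∑ c ∈ W, voteCount σ c

/-- The outcome of a strategy profile: the size-`k` committees maximizing the sum of the
vote counts of their members. -/
def Outcome (F : Frame V C) (σ : V → Finset C) : Set (Finset C) :=
  {W | W.card = F.k ∧ ∀ W' : Finset C, W'.card = F.k → committeeScore σ W' ≤ committeeScore σ W}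

/-- The utility of party `Pj`: the minimum, over winning committees `W`, of `|W ∩ Pj|`. -/
noncomputable def Util (F : Frame V C) (Pj : Finset C) (σ : V → Finset C) : ℕ :=
  sInf ((fun W => (W ∩ Pj).card) '' Outcome F σ)

/-- A strategy profile is valid when every ballot consists of exactly `l` candidates. -/
def ValidProfile (F : Frame V C) (σ : V → Finset C) : Prop := ∀ i, (σ i).card = F.l

/-- The number of voters of party `Pj`. -/
def nVoters (F : Frame V C) (Pj : Finset C) : ℕ := (univ.filter fun i => F.A i = Pj).card

/-- The lower quota `q = ⌊k · n_j / n⌋` of party `Pj`. -/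
def quota (F : Frame V C) (Pj : Finset C) : ℕ := F.k * nVoters F Pj / Fintype.card V

/-- Party `Pj` plays a lower-quota strategy with support `X` under the profile `σ`:
`X` consists of `quota F Pj` of its own candidates, every ballot of a voter of `Pj` is a
subset of `X`, and every candidate of `X` occurs in either `⌊n_j · l / q_j⌋` or
`⌈n_j · l / q_j⌉` of the ballots of the voters of `Pj`. -/
def PlaysLQ (F : Frame V C) (σ : V → Finset C) (Pj X : Finset C) : Prop :=
  X ⊆ Pj ∧ X.card = quota F Pj ∧ (∀ i, F.A i = Pj → σ i ⊆ X) ∧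
  ∀ c ∈ X,
    (univ.filter fun i => F.A i = Pj ∧ c ∈ σ i).card = nVoters F Pj * F.l / quota F Pj ∨
    (univ.filter fun i => F.A i = Pj ∧ c ∈ σ i).card =
      (nVoters F Pj * F.l + quota F Pj - 1) / quota F Pj

/-!
A deviation of party `P` can only take votes away from its own candidates (those of its sincere
ballot had `n_P` votes, and none gets more than `n_P`) and add votes to outsiders. Take winning
committees `W` before and `W'` after the deviation, each with the fewest seats for `P`, and
suppose `W'` has more. If an outsider `d ∈ W` were missing from `W'`, minimality of `W'` would
make every seat of `P` in `W'` strictly outvote `d`; so these seats all got votes, hence lie in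
the new ballot, and `P` has at most `l` of them. Then `W` gives `P` fewer than `l` seats, so
some sincere candidate with `n_P` votes is left out of `W`, and `d ∈ W` had at least `n_P`
votes before, hence also after the deviation, which no seat of `P` in `W'` can strictly beat.
So every outsider in `W` lies in `W'`, and `W'` has no more seats for `P` than `W`.
-/

theorem Finset.card_insert_erase_of_notMem {α : Type*} [DecidableEq α] {X : Finset α}
    {c d : α} (hc : c ∈ X) (hd : d ∉ X) : #(insert d (X.erase c)) = #X := by
  rw [card_insert_of_notMem fun h => hd (mem_of_mem_erase h), card_erase_add_one hc]

theorem Frame.eq_of_mem_of_mem (F : Frame V C) {i i' : V} {c : C} (hi : c ∈ F.A i)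
    (hi' : c ∈ F.A i') : F.A i = F.A i' :=
  (F.A_partylist i i').resolve_right (nonempty_iff_ne_empty.mp ⟨c, mem_inter.mpr ⟨hi, hi'⟩⟩)

section VoteCount

variable {τ τ' : V → Finset C}

omit [DecidableEq V] [Fintype C] in
theorem voteCount_mono {c : C} (h : ∀ i, c ∈ τ i → c ∈ τ' i) :
    voteCount τ c ≤ voteCount τ' c :=
  card_le_card fun i hi => by simp_all

theorem nVoters_le_voteCount (F : Frame V C) {Pj : Finset C} {c : C}
    (h : ∀ i, F.A i = Pj → c ∈ τ i) : nVoters F Pj ≤ voteCount τ c :=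
  card_le_card fun i hi => by simp_all

theorem voteCount_le_nVoters (F : Frame V C) {Pj : Finset C} {c : C}
    (h : ∀ i, c ∈ τ i → F.A i = Pj) : voteCount τ c ≤ nVoters F Pj :=
  card_le_card fun i hi => by simp_all

omit [DecidableEq V] [Fintype C] in
theorem exists_mem_of_voteCount_pos {c : C} (h : 0 < voteCount τ c) : ∃ i, c ∈ τ i := by
  obtain ⟨i, hi⟩ := card_pos.mp h
  exact ⟨i, (mem_filter.mp hi).2⟩

omit [DecidableEq V] [Fintype C] in
theorem committeeScore_insert_erase_add (X : Finset C) {c d : C} (hc : c ∈ X) (hd : d ∉ X) :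
    committeeScore τ (insert d (X.erase c)) + voteCount τ c =
      committeeScore τ X + voteCount τ d := by
  rw [committeeScore, sum_insert fun h => hd (mem_of_mem_erase h), committeeScore,
    ← add_sum_erase _ _ hc]
  ring

end VoteCount

section Outcome

variable {F : Frame V C} {τ : V → Finset C}

theorem outcome_nonempty (F : Frame V C) (τ : V → Finset C) : (Outcome F τ).Nonempty := by
  obtain ⟨W₀, -, hW₀⟩ := exists_subset_card_eq (s := (univ : Finset C)) (n := F.k)
    (by simpa using F.k_le_card)
  obtain ⟨W, hW, hmax⟩ := exists_max_image {W : Finset C | #W = F.k} (committeeScore τ)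
    ⟨W₀, by simpa using hW₀⟩
  exact ⟨W, (mem_filter.mp hW).2, fun W' hW' => hmax W' (by simpa using hW')⟩

theorem voteCount_le_of_mem_outcome {X : Finset C} (hX : X ∈ Outcome F τ) {c d : C}
    (hc : c ∈ X) (hd : d ∉ X) : voteCount τ d ≤ voteCount τ c := by
  have := hX.2 _ ((card_insert_erase_of_notMem hc hd).trans hX.1)
  have := committeeScore_insert_erase_add (τ := τ) X hc hd
  omega

theorem insert_erase_mem_outcome {X : Finset C} (hX : X ∈ Outcome F τ) {c d : C} (hc : c ∈ X)
    (hd : d ∉ X) (heq : voteCount τ d = voteCount τ c) :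
    insert d (X.erase c) ∈ Outcome F τ := by
  have hscore := committeeScore_insert_erase_add (τ := τ) X hc hd
  refine ⟨(card_insert_erase_of_notMem hc hd).trans hX.1, fun W' hW' => ?_⟩
  have := hX.2 W' hW'
  omega

theorem util_le_card_inter {W : Finset C} (hW : W ∈ Outcome F τ) (Pj : Finset C) :
    Util F Pj τ ≤ #(W ∩ Pj) :=
  Nat.sInf_le ⟨W, hW, rfl⟩

theorem exists_mem_outcome_card_inter_eq_util (F : Frame V C) (τ : V → Finset C)
    (Pj : Finset C) : ∃ W ∈ Outcome F τ, #(W ∩ Pj) = Util F Pj τ :=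
  Nat.sInf_mem ((outcome_nonempty F τ).image _)

/-- On a tie, swapping `c` for `d` would give a winning committee with fewer seats for `Pj`. -/
theorem voteCount_lt_of_card_inter_eq_util {Pj W : Finset C} (hW : W ∈ Outcome F τ)
    (hmin : #(W ∩ Pj) = Util F Pj τ) {c d : C} (hc : c ∈ W ∩ Pj) (hdW : d ∉ W)
    (hdP : d ∉ Pj) : voteCount τ d < voteCount τ c := by
  obtain ⟨hcW, hcP⟩ := mem_inter.mp hc
  refine (voteCount_le_of_mem_outcome hW hcW hdW).lt_of_ne fun heq => ?_
  have hswap : insert d (W.erase c) ∩ Pj = (W ∩ Pj).erase c := by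
    ext x
    simp only [mem_inter, mem_insert, mem_erase]
    constructor
    · rintro ⟨rfl | hx, hxP⟩
      · exact absurd hxP hdP
      · exact ⟨hx.1, hx.2, hxP⟩
    · rintro ⟨hxc, hxW, hxP⟩
      exact ⟨Or.inr ⟨hxc, hxW⟩, hxP⟩
  have := util_le_card_inter (insert_erase_mem_outcome hW hcW hdW heq) Pj
  rw [hswap, card_erase_of_mem hc] at this
  have := card_pos.mpr ⟨c, hc⟩
  omega

theorem util_le_util_of_voteCount {τ' : V → Finset C} {Pj s : Finset C} {n : ℕ} (hsP : s ⊆ Pj)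
    (hs : ∀ c ∈ s, n ≤ voteCount τ c) (hP : ∀ c ∈ Pj, voteCount τ' c ≤ n)
    (hsupp : #{c ∈ Pj | 0 < voteCount τ' c} ≤ #s)
    (hout : ∀ d ∉ Pj, voteCount τ d ≤ voteCount τ' d) : Util F Pj τ' ≤ Util F Pj τ := by
  obtain ⟨W, hW, hWmin⟩ := exists_mem_outcome_card_inter_eq_util F τ Pj
  obtain ⟨W', hW', hW'min⟩ := exists_mem_outcome_card_inter_eq_util F τ' Pj
  rw [← hWmin, ← hW'min]
  by_contra! hlt
  have hsdiff : W \ Pj ⊆ W' := by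
    intro d hd
    obtain ⟨hdW, hdP⟩ := mem_sdiff.mp hd
    by_contra hdW'
    have hbeat : ∀ c ∈ W' ∩ Pj, voteCount τ' d < voteCount τ' c := fun c hc =>
      voteCount_lt_of_card_inter_eq_util hW' hW'min hc hdW' hdP
    have hseats : #(W' ∩ Pj) ≤ #s := le_trans (card_le_card fun c hc => mem_filter.mpr
      ⟨(mem_inter.mp hc).2, (Nat.zero_le _).trans_lt (hbeat c hc)⟩) hsupp
    obtain ⟨c₀, hc₀s, hc₀W⟩ : ∃ c₀ ∈ s, c₀ ∉ W := by
      by_contra! hsW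
      have := card_le_card fun c hc => mem_inter.mpr ⟨hsW c hc, hsP hc⟩
      omega
    have hnd : n ≤ voteCount τ' d :=
      ((hs c₀ hc₀s).trans (voteCount_le_of_mem_outcome hW hdW hc₀W)).trans (hout d hdP)
    obtain ⟨c, hc⟩ : (W' ∩ Pj).Nonempty := card_pos.mp (by omega)
    have := hP c (mem_inter.mp hc).2
    have := hbeat c hc
    omega
  have := card_le_card (subset_sdiff.mpr ⟨hsdiff, sdiff_disjoint⟩ : W \ Pj ⊆ W' \ Pj)
  have := card_inter_add_card_sdiff W Pj
  have := card_inter_add_card_sdiff W' Pj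
  have := hW.1
  have := hW'.1
  omega

end Outcome

theorem stmt12_general (F : Frame V C) (g : ℕ) (P : Fin g → Finset C)
    (hPall : ∀ i : V, ∃ j, F.A i = P j)
    (hPrep : ∀ j, ∃ i : V, F.A i = P j)
    (s : Fin g → Finset C) (hscard : ∀ j, (s j).card = F.l) (hssub : ∀ j, s j ⊆ P j)
    (σ : V → Finset C) (hσ : ∀ i (j : Fin g), F.A i = P j → σ i = s j)
    (j0 : Fin g) (s' : Finset C) (hs'card : s'.card = F.l)
    (σ' : V → Finset C)
    (hσ'dev : ∀ i, F.A i = P j0 → σ' i = s')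
    (hσ'same : ∀ i, F.A i ≠ P j0 → σ' i = σ i) :
    Util F (P j0) σ' ≤ Util F (P j0) σ := by
  obtain ⟨i₀, hi₀⟩ := hPrep j0
  have hsincere : ∀ i, σ i ⊆ F.A i := fun i => by
    obtain ⟨j, hj⟩ := hPall i
    rw [hσ i j hj, hj]
    exact hssub j
  have hvoter : ∀ c ∈ P j0, ∀ i, c ∈ σ' i → F.A i = P j0 := fun c hc i hci => by
    by_contra hA
    rw [hσ'same i hA] at hci
    exact hA (hi₀ ▸ F.eq_of_mem_of_mem (hsincere i hci) (hi₀ ▸ hc))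
  refine util_le_util_of_voteCount (hssub j0)
    (fun c hc => nVoters_le_voteCount F fun i hi => hσ i j0 hi ▸ hc)
    (fun c hc => voteCount_le_nVoters F (hvoter c hc)) ?_ fun d hd => voteCount_mono ?_
  · refine (card_le_card fun c hc => ?_).trans (hs'card.trans (hscard j0).symm).le
    obtain ⟨hcP, hpos⟩ := mem_filter.mp hc
    obtain ⟨i, hi⟩ := exists_mem_of_voteCount_pos hpos
    exact hσ'dev i (hvoter c hcP i hi) ▸ hi
  · intro i hi
    by_cases hA : F.A i = P j0
    · exact absurd (hssub j0 (hσ i j0 hA ▸ hi)) hd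
    · exact hσ'same i hA ▸ hi

/-- In any broadcasted LV-game in which every party has at least `l`
candidates, any strategy profile in which each party broadcasts a single ballot drawn
from its own candidates (`s j ⊆ P j`) is a pure strategy Nash equilibrium: no party `j0`
can profit by broadcasting any alternative ballot `s'` to its voters. -/
theorem stmt12 (F : Frame V C) (g : ℕ) (P : Fin g → Finset C)
    (hPinj : Function.Injective P)
    (hPall : ∀ i : V, ∃ j, F.A i = P j)
    (hPrep : ∀ j, ∃ i : V, F.A i = P j)
    (hPl : ∀ j, F.l ≤ (P j).card)
    (s : Fin g → Finset C) (hscard : ∀ j, (s j).card = F.l) (hssub : ∀ j, s j ⊆ P j)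
    (σ : V → Finset C) (hσ : ∀ i (j : Fin g), F.A i = P j → σ i = s j)
    (j0 : Fin g) (s' : Finset C) (hs'card : s'.card = F.l)
    (σ' : V → Finset C)
    (hσ'dev : ∀ i, F.A i = P j0 → σ' i = s')
    (hσ'same : ∀ i, F.A i ≠ P j0 → σ' i = σ i) :
    Util F (P j0) σ' ≤ Util F (P j0) σ :=
  stmt12_general F g P hPall hPrep s hscard hssub σ hσ j0 s' hs'card σ' hσ'dev hσ'same
end

section
/- In any LV-game on a party-list frame, suppose party P_i satisfies l ≤ ⌊k·n_i/n⌋ ≤ |P_i| and plays a lower-quota strategy with support X_i (a set of q_i = ⌊k·n_i/n⌋ of its own candidates over which the n_i·l votes of its voters are spread as evenly as possible). Then, whatever strategies the other parties play, there exists a winning committee W ∈ O(S) with X_i ⊆ W. -/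
open Finset

variable {V C : Type*} [Fintype V] [DecidableEq V] [Fintype C] [DecidableEq C]

/-! Among the winning committees take one, `W`, missing as few members of `X` as possible, and
suppose it misses `c ∈ X`. Then `W` has at least `k - q + 1` members outside `X`. They cannot all
have more votes than `c`: every candidate of `X` gets at least `m = ⌊n_i l / q⌋` votes from its own
party, all votes outside `X` come from the other `n - n_i` voters, and `q n ≤ k n_i` gives
`(n - n_i) l < (k - q + 1)(m + 1)`. Swapping `c` for a member of `W \ X` with no more votes than `c`
keeps the committee winning and misses fewer members of `X`. -/

section MaxSum

variable {α M : Type*} [AddCommMonoid M] [LinearOrder M] {f : α → M} {k : ℕ}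

def IsMaxSumOfCard (f : α → M) (k : ℕ) (W : Finset α) : Prop :=
  #W = k ∧ ∀ W' : Finset α, #W' = k → ∑ x ∈ W', f x ≤ ∑ x ∈ W, f x

theorem exists_isMaxSumOfCard [Fintype α] (hk : k ≤ Fintype.card α) :
    ∃ W, IsMaxSumOfCard f k W := by
  obtain ⟨W, hW, hmax⟩ := (powersetCard k (univ : Finset α)).exists_max_image (∑ x ∈ ·, f x)
    (powersetCard_nonempty.mpr (by simpa using hk))
  exact ⟨W, mem_powersetCard_univ.mp hW, fun W' hW' => hmax W' (mem_powersetCard_univ.mpr hW')⟩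

variable [IsOrderedAddMonoid M] [DecidableEq α]

theorem IsMaxSumOfCard.insert_erase {W : Finset α} (hW : IsMaxSumOfCard f k W) {c d : α}
    (hc : c ∉ W) (hd : d ∈ W) (hdc : f d ≤ f c) :
    IsMaxSumOfCard f k (insert c (W.erase d)) := by
  have hc' : c ∉ W.erase d := fun h => hc (mem_of_mem_erase h)
  have hcard : #(insert c (W.erase d)) = k := by
    rw [card_insert_of_notMem hc', card_erase_add_one hd, hW.1]
  refine ⟨hcard, fun W' hW' => (hW.2 W' hW').trans ?_⟩
  rw [sum_insert hc', ← add_sum_erase W f hd]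
  exact add_le_add_left hdc _

theorem exists_isMaxSumOfCard_superset [Fintype α] (hk : k ≤ Fintype.card α) {X : Finset α}
    (hX : ∀ c ∈ X, #X + #{d ∈ Xᶜ | f c < f d} ≤ k) : ∃ W, IsMaxSumOfCard f k W ∧ X ⊆ W := by
  classical
  obtain ⟨W, hW, hmin⟩ := exists_min_image {W | IsMaxSumOfCard f k W} (fun W => #(X \ W))
    (by simpa [Finset.Nonempty] using exists_isMaxSumOfCard hk)
  rw [mem_filter_univ] at hW
  refine ⟨W, hW, fun c hcX => by_contra fun hcW => ?_⟩
  obtain ⟨d, hd, hdc⟩ : ∃ d ∈ W \ X, d ∉ {d ∈ Xᶜ | f c < f d} := by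
    apply exists_mem_notMem_of_card_lt_card
    have hWX : #(W ∩ X) < #X :=
      card_lt_card ⟨inter_subset_right, fun h => hcW (inter_subset_left (h hcX))⟩
    linarith [card_sdiff_add_card_inter W X, hX c hcX, hW.1]
  obtain ⟨hdW, hdX⟩ := mem_sdiff.mp hd
  have hdc : f d ≤ f c := by simpa [hdX] using hdc
  have hlt : #(X \ insert c (W.erase d)) < #(X \ W) := by
    refine card_lt_card ⟨fun x hx => ?_, fun h => ?_⟩
    · obtain ⟨hxX, hx⟩ := mem_sdiff.mp hx
      refine mem_sdiff.mpr ⟨hxX, fun hxW => hx (mem_insert_of_mem (mem_erase.mpr ⟨?_, hxW⟩))⟩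
      rintro rfl
      exact hdX hxX
    · exact (mem_sdiff.mp (h (mem_sdiff.mpr ⟨hcX, hcW⟩))).2 (mem_insert_self c _)
  exact (hmin _ ((mem_filter_univ _).mpr (hW.insert_erase hcW hdW hdc))).not_gt hlt

end MaxSum

theorem add_quota_le_of_mul_le {k r s l b : ℕ} (hq : 0 < k * s / (r + s))
    (hb : b * (s * l / (k * s / (r + s)) + 1) ≤ r * l) : b + k * s / (r + s) ≤ k := by
  have hn : 0 < r + s := Nat.pos_of_ne_zero fun h => by simp [h] at hq
  have hquota : k * s / (r + s) * (r + s) ≤ k * s := Nat.div_mul_le_self _ _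
  generalize k * s / (r + s) = q at *
  have hm : s * l < (s * l / q + 1) * q := by
    have := Nat.lt_div_mul_add (a := s * l) hq
    nlinarith
  generalize s * l / q = m at *
  obtain ⟨t, rfl⟩ : ∃ t, k = q + t := Nat.exists_eq_add_of_le (by nlinarith)
  have hrq : q * r ≤ t * s := by nlinarith
  have : b * (m + 1) * q ≤ t * (m + 1) * q := calc
    b * (m + 1) * q ≤ r * l * q := Nat.mul_le_mul_right q hb
    _ = q * r * l := by ring
    _ ≤ t * s * l := Nat.mul_le_mul_right l hrq
    _ = t * (s * l) := by ring
    _ ≤ t * ((m + 1) * q) := Nat.mul_le_mul_left t hm.le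
    _ = t * (m + 1) * q := by ring
  have : b ≤ t := Nat.le_of_mul_le_mul_right (Nat.le_of_mul_le_mul_right this hq) m.succ_pos
  omega

omit [DecidableEq V] [Fintype C] in
theorem sum_voteCount_eq (σ : V → Finset C) (s : Finset C) :
    ∑ c ∈ s, voteCount σ c = ∑ i, #{c ∈ s | c ∈ σ i} :=
  (sum_card_bipartiteAbove_eq_sum_card_bipartiteBelow (fun i c => c ∈ σ i)).symm

theorem sum_voteCount_compl_le {F : Frame V C} {σ : V → Finset C} (hσ : ValidProfile F σ)
    {P X : Finset C} (hX : ∀ i, F.A i = P → σ i ⊆ X) :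
    ∑ c ∈ Xᶜ, voteCount σ c ≤ #{i | F.A i ≠ P} * F.l := by
  rw [sum_voteCount_eq, ← sum_filter_of_ne (p := fun i => F.A i ≠ P)]
  · refine sum_le_card_nsmul _ _ _ fun i _ => ?_
    exact (card_le_card fun c hc => (mem_filter.mp hc).2).trans (hσ i).le
  · intro i _ hi hP
    refine hi (card_eq_zero.mpr (filter_eq_empty_iff.mpr fun c hc hci => ?_))
    exact mem_compl.mp hc (hX i hP hci)

theorem PlaysLQ.quota_pos {F : Frame V C} {σ : V → Finset C} {P X : Finset C}
    (h : PlaysLQ F σ P X) (hX : X.Nonempty) : 0 < quota F P :=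
  h.2.1 ▸ card_pos.mpr hX

theorem PlaysLQ.div_quota_le_voteCount {F : Frame V C} {σ : V → Finset C} {P X : Finset C}
    (h : PlaysLQ F σ P X) {c : C} (hc : c ∈ X) :
    nVoters F P * F.l / quota F P ≤ voteCount σ c := by
  have hparty : #{i | F.A i = P ∧ c ∈ σ i} ≤ voteCount σ c :=
    card_le_card (monotone_filter_right _ fun _ _ h => h.2)
  have hq : 0 < quota F P := h.quota_pos ⟨c, hc⟩
  have hceil : nVoters F P * F.l / quota F P ≤ (nVoters F P * F.l + quota F P - 1) / quota F P :=
    Nat.div_le_div_right (by omega)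
  rcases h.2.2.2 c hc with h | h
  · exact h ▸ hparty
  · exact hceil.trans (h ▸ hparty)

theorem PlaysLQ.card_add_card_filter_voteCount_lt_le {F : Frame V C} {σ : V → Finset C}
    (hσ : ValidProfile F σ) {P X : Finset C} (h : PlaysLQ F σ P X) {c : C} (hc : c ∈ X) :
    #X + #{d ∈ Xᶜ | voteCount σ c < voteCount σ d} ≤ F.k := by
  have hn : #{i | F.A i ≠ P} + nVoters F P = Fintype.card V := by
    rw [add_comm]; exact card_filter_add_card_filter_not _
  have hq : quota F P = F.k * nVoters F P / (#{i | F.A i ≠ P} + nVoters F P) := by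
    rw [hn]; rfl
  rw [h.2.1, add_comm, hq]
  refine add_quota_le_of_mul_le (l := F.l) (hq ▸ h.quota_pos ⟨c, hc⟩) ?_
  rw [← hq]
  calc #{d ∈ Xᶜ | voteCount σ c < voteCount σ d} * (nVoters F P * F.l / quota F P + 1)
      ≤ ∑ d ∈ {d ∈ Xᶜ | voteCount σ c < voteCount σ d}, voteCount σ d := by
        rw [← smul_eq_mul]
        exact card_nsmul_le_sum _ _ _ fun d hd =>
          (h.div_quota_le_voteCount hc).trans_lt (mem_filter.mp hd).2
    _ ≤ ∑ d ∈ Xᶜ, voteCount σ d := sum_le_sum_of_subset (filter_subset _ _)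
    _ ≤ #{i | F.A i ≠ P} * F.l := sum_voteCount_compl_le hσ h.2.2.1

theorem stmt13_general (F : Frame V C) (σ : V → Finset C) (hσ : ValidProfile F σ)
    (Pi : Finset C) (X : Finset C) (hLQ : PlaysLQ F σ Pi X) :
    ∃ W ∈ Outcome F σ, X ⊆ W :=
  exists_isMaxSumOfCard_superset F.k_le_card fun _ hc =>
    hLQ.card_add_card_filter_voteCount_lt_le hσ hc

/-- In any LV-game on a party-list frame, if party `Pi` (with
`l ≤ ⌊k·n_i/n⌋ ≤ |P_i|`) plays a lower-quota strategy with support `X`, then whatever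
the other parties play, some winning committee contains all of `X`. -/
theorem stmt13 (F : Frame V C) (σ : V → Finset C) (hσ : ValidProfile F σ)
    (Pi : Finset C) (hparty : ∃ i : V, F.A i = Pi)
    (hql : F.l ≤ quota F Pi) (hqP : quota F Pi ≤ Pi.card)
    (X : Finset C) (hLQ : PlaysLQ F σ Pi X) :
    ∃ W ∈ Outcome F σ, X ⊆ W :=
  stmt13_general F σ hσ Pi X hLQ
end

section
/- In any broadcasted laminar election E = (N, C, k, l, A, L) in which every voter approves at least l candidates (|A_i| ≥ l for all i ∈ N) and both LV and AV are resolute (LV(E) = {W_LV} and AV(E) = {W_AV} are singletons), the winning committee of LV has CC-score at least that of the winning committee of AV: s_CC(A, W_LV) ≥ s_CC(A, W_AV). -/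
open Finset

/-- An election `E = (N, C, k, l, A, L)` with explicit voter set `N` and candidate set
`C` inside ambient types `ι` and `κ`. -/
structure ElectionS (ι κ : Type*) [Fintype ι] [DecidableEq ι] [Fintype κ] [DecidableEq κ] where
  N : Finset ι
  C : Finset κ
  k : ℕ
  l : ℕ
  A : ι → Finset κ
  L : ι → Finset κ
  A_sub_C : ∀ i ∈ N, A i ⊆ C
  L_sub_C : ∀ i ∈ N, L i ⊆ C
  k_le_card : k ≤ C.card
  one_le_l : 1 ≤ l
  l_le_k : l ≤ k
  ballot_card : ∀ i ∈ N, (L i).card = l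
  ballot_sub_approval : ∀ i ∈ N, l ≤ (A i).card → L i ⊆ A i
  approval_ssub_ballot : ∀ i ∈ N, (A i).card < l → A i ⊂ L i

variable {ι κ : Type*} [Fintype ι] [DecidableEq ι] [Fintype κ] [DecidableEq κ]

/-- The AV-score of a candidate. -/
def sAVcS (E : ElectionS ι κ) (c : κ) : ℕ := (E.N.filter fun i => c ∈ E.A i).card

/-- The LV-score of a candidate. -/
def sLVcS (E : ElectionS ι κ) (c : κ) : ℕ := (E.N.filter fun i => c ∈ E.L i).card

/-- The AV-score of a committee. -/
def sAVS (E : ElectionS ι κ) (W : Finset κ) : ℕ := ∑ c ∈ W, sAVcS E c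

/-- The LV-score of a committee. -/
def sLVS (E : ElectionS ι κ) (W : Finset κ) : ℕ := ∑ c ∈ W, sLVcS E c

/-- The winning committees of Limited Voting. -/
def LVwinS (E : ElectionS ι κ) : Set (Finset κ) :=
  {W | W ⊆ E.C ∧ W.card = E.k ∧
    ∀ W' : Finset κ, W' ⊆ E.C → W'.card = E.k → sLVS E W' ≤ sLVS E W}

/-- The winning committees of Approval Voting. -/
def AVwinS (E : ElectionS ι κ) : Set (Finset κ) :=
  {W | W ⊆ E.C ∧ W.card = E.k ∧
    ∀ W' : Finset κ, W' ⊆ E.C → W'.card = E.k → sAVS E W' ≤ sAVS E W}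

/-- The Chamberlin–Courant score of a committee. -/
def sCCS (E : ElectionS ι κ) (W : Finset κ) : ℕ :=
  (E.N.filter fun i => (W ∩ E.A i).Nonempty).card

/-- A profile is unanimous on `N` when all voters of `N` have the same approval set. -/
def Unanimous (N : Finset ι) (A : ι → Finset κ) : Prop := ∀ i ∈ N, ∀ j ∈ N, A i = A j

/-- Laminar elections (following Peters–Skowron), phrased on the data `(N, C, k, A)`:
(1) unanimous elections with `|C| ≥ k`; (2) a candidate `c` approved by everyone can be
removed, provided the resulting election with committee size `k − 1` is laminar and not
unanimous; (3) the disjoint union of two laminar elections with `|N₁|·k₂ = |N₂|·k₁`. -/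
inductive Laminar : Finset ι → Finset κ → ℕ → (ι → Finset κ) → Prop
  | unanimous (N : Finset ι) (C : Finset κ) (k : ℕ) (A : ι → Finset κ) :
      Unanimous N A → k ≤ C.card → Laminar N C k A
  | common (N : Finset ι) (C : Finset κ) (k : ℕ) (A : ι → Finset κ) (c : κ) :
      c ∈ C → (∀ i ∈ N, c ∈ A i) → 1 ≤ k →
      ¬ Unanimous N (fun i => (A i).erase c) →
      Laminar N (C.erase c) (k - 1) (fun i => (A i).erase c) →
      Laminar N C k A
  | union (N₁ N₂ : Finset ι) (C₁ C₂ : Finset κ) (k₁ k₂ : ℕ) (A : ι → Finset κ) :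
      Disjoint N₁ N₂ → Disjoint C₁ C₂ →
      (∀ i ∈ N₁, A i ⊆ C₁) → (∀ i ∈ N₂, A i ⊆ C₂) →
      N₁.card * k₂ = N₂.card * k₁ →
      Laminar N₁ C₁ k₁ A → Laminar N₂ C₂ k₂ A →
      Laminar (N₁ ∪ N₂) (C₁ ∪ C₂) (k₁ + k₂) A

/-- `E` is consistent with a broadcasting (linear) order, encoded by an injective
priority function `f` (`f c < f c'` meaning `c ≻ c'`), which moreover prioritizes
candidates with strictly larger AV-score. -/
def BroadcastedS (E : ElectionS ι κ) : Prop :=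
  ∃ f : κ → ℕ, Function.Injective f ∧
    (∀ i ∈ E.N, ∀ c ∈ E.A i, ∀ c' ∈ E.A i, c ∈ E.L i → c' ∉ E.L i → f c < f c') ∧
    (∀ c ∈ E.C, ∀ c' ∈ E.C, sAVcS E c' < sAVcS E c → f c < f c')


lemma lamSupp {N : Finset ι} {C : Finset κ} {k : ℕ} {A : ι → Finset κ}
    (h : Laminar N C k A) :
    ∀ c c' : κ, ((N.filter fun i => c ∈ A i) ∩ (N.filter fun i => c' ∈ A i)).Nonempty →
      (N.filter fun i => c ∈ A i) ⊆ (N.filter fun i => c' ∈ A i) ∨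
      (N.filter fun i => c' ∈ A i) ⊆ (N.filter fun i => c ∈ A i) := by
  induction h with
  | unanimous N C k A hu hk =>
      rintro c c' ⟨j, hj⟩
      rw [mem_inter, mem_filter, mem_filter] at hj
      obtain ⟨⟨hjN, hjc⟩, ⟨-, hjc'⟩⟩ := hj
      right
      intro i hi
      rw [mem_filter] at hi ⊢
      refine ⟨hi.1, ?_⟩
      rw [hu i hi.1 j hjN]
      exact hjc
  | common N C k A c0 hc0 hall hk hnu hrec IH =>
      intro c c' hne
      by_cases hc : c = c0
      · subst hc
        right; intro i hi
        rw [mem_filter] at hi ⊢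
        exact ⟨hi.1, hall i hi.1⟩
      · by_cases hc' : c' = c0
        · subst hc'
          left; intro i hi
          rw [mem_filter] at hi ⊢
          exact ⟨hi.1, hall i hi.1⟩
        · have e : ∀ x : κ, x ≠ c0 →
              (N.filter fun i => x ∈ A i) = (N.filter fun i => x ∈ (A i).erase c0) := by
            intro x hx
            apply filter_congr
            intro i _
            simp [Finset.mem_erase, hx]
          rw [e c hc, e c' hc'] at hne ⊢
          exact IH c c' hne
  | union N1 N2 C1 C2 k1 k2 A hN hC hA1 hA2 hbal h1 h2 IH1 IH2 =>
      rintro c c' ⟨j, hj⟩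
      rw [mem_inter, mem_filter, mem_filter, mem_union] at hj
      obtain ⟨⟨hjN, hjc⟩, ⟨-, hjc'⟩⟩ := hj
      have key : ∀ (M1 M2 : Finset ι) (D1 D2 : Finset κ), Disjoint D1 D2 →
          (∀ i ∈ M1, A i ⊆ D1) → (∀ i ∈ M2, A i ⊆ D2) → ∀ x ∈ D1,
          ((M1 ∪ M2).filter fun i => x ∈ A i) = M1.filter fun i => x ∈ A i := by
        intro M1 M2 D1 D2 hD hB1 hB2 x hx
        rw [filter_union]
        have h0 : (M2.filter fun i => x ∈ A i) = ∅ := by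
          rw [filter_eq_empty_iff]
          intro i hi hxa
          exact (Finset.disjoint_left.mp hD hx) (hB2 i hi hxa)
        rw [h0, union_empty]
      cases hjN with
      | inl hj1 =>
          have hcC : c ∈ C1 := hA1 j hj1 hjc
          have hc'C : c' ∈ C1 := hA1 j hj1 hjc'
          rw [key N1 N2 C1 C2 hC hA1 hA2 c hcC, key N1 N2 C1 C2 hC hA1 hA2 c' hc'C]
          refine IH1 c c' ⟨j, ?_⟩
          rw [mem_inter, mem_filter, mem_filter]
          exact ⟨⟨hj1, hjc⟩, ⟨hj1, hjc'⟩⟩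
      | inr hj2 =>
          have hcC : c ∈ C2 := hA2 j hj2 hjc
          have hc'C : c' ∈ C2 := hA2 j hj2 hjc'
          rw [union_comm N1 N2,
            key N2 N1 C2 C1 hC.symm hA2 hA1 c hcC, key N2 N1 C2 C1 hC.symm hA2 hA1 c' hc'C]
          refine IH2 c c' ⟨j, ?_⟩
          rw [mem_inter, mem_filter, mem_filter]
          exact ⟨⟨hj2, hjc⟩, ⟨hj2, hjc'⟩⟩

/-- Strict score separation between the unique winner and non-members. -/
lemma sep_generic {C W : Finset κ} {s : κ → ℕ} {k : ℕ}
    (hWsub : W ⊆ C) (hWcard : W.card = k)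
    (hmax : ∀ Y : Finset κ, Y ⊆ C → Y.card = k → ∑ x ∈ Y, s x ≤ ∑ x ∈ W, s x)
    (huniq : ∀ X : Finset κ, X ⊆ C → X.card = k →
      (∀ Y : Finset κ, Y ⊆ C → Y.card = k → ∑ x ∈ Y, s x ≤ ∑ x ∈ X, s x) → X = W)
    {c c' : κ} (hc : c ∈ W) (hc' : c' ∈ C) (hcW : c' ∉ W) : s c' < s c := by
  by_contra hcon
  push_neg at hcon
  have hne : c' ∉ W.erase c := fun h => hcW (mem_of_mem_erase h)
  have hk1 : 1 ≤ k := hWcard ▸ card_pos.mpr ⟨c, hc⟩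
  have hXcard : (insert c' (W.erase c)).card = k := by
    rw [card_insert_of_notMem hne, card_erase_of_mem hc, hWcard]
    omega
  have hXsub : insert c' (W.erase c) ⊆ C := by
    rw [insert_subset_iff]
    exact ⟨hc', (erase_subset _ _).trans hWsub⟩
  have hsum : ∑ x ∈ W, s x ≤ ∑ x ∈ insert c' (W.erase c), s x := by
    rw [Finset.sum_insert hne, ← Finset.add_sum_erase W s hc]
    exact Nat.add_le_add_right hcon _
  have hXW : insert c' (W.erase c) = W :=
    huniq _ hXsub hXcard fun Y h1 h2 => le_trans (hmax Y h1 h2) hsum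
  exact hcW (hXW ▸ mem_insert_self c' (W.erase c))

/-- In any broadcasted laminar election in which every voter approves at
least `l` candidates and both LV and AV are resolute, the LV-winning committee has
CC-score at least that of the AV-winning committee. -/
theorem stmt17 (E : ElectionS ι κ)
    (hlam : Laminar E.N E.C E.k E.A)
    (hbr : BroadcastedS E)
    (hAl : ∀ i ∈ E.N, E.l ≤ (E.A i).card)
    (WLV WAV : Finset κ)
    (hLV : LVwinS E = {WLV}) (hAV : AVwinS E = {WAV}) :
    sCCS E WAV ≤ sCCS E WLV := by
  classical
  obtain ⟨f, hfinj, hcons, hfav⟩ := hbr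
  have hWLV : WLV ∈ LVwinS E := by rw [hLV]; exact Set.mem_singleton _
  have hWAV : WAV ∈ AVwinS E := by rw [hAV]; exact Set.mem_singleton _
  obtain ⟨hLVsub, hLVcard, hLVmax⟩ := hWLV
  obtain ⟨hAVsub, hAVcard, hAVmax⟩ := hWAV
  have hLVuniq : ∀ W, W ∈ LVwinS E → W = WLV := fun W h => by rw [hLV] at h; exact h
  have hAVuniq : ∀ W, W ∈ AVwinS E → W = WAV := fun W h => by rw [hAV] at h; exact h
  have hsubLA : ∀ i ∈ E.N, E.L i ⊆ E.A i := fun i hi => E.ballot_sub_approval i hi (hAl i hi)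
  have sepAV : ∀ c ∈ WAV, ∀ c' ∈ E.C, c' ∉ WAV → sAVcS E c' < sAVcS E c := by
    intro c hc c' hc' hcW
    exact sep_generic hAVsub hAVcard (fun Y h1 h2 => hAVmax Y h1 h2)
      (fun X h1 h2 h3 => hAVuniq X ⟨h1, h2, h3⟩) hc hc' hcW
  have sepLV : ∀ c ∈ WLV, ∀ c' ∈ E.C, c' ∉ WLV → sLVcS E c' < sLVcS E c := by
    intro c hc c' hc' hcW
    exact sep_generic hLVsub hLVcard (fun Y h1 h2 => hLVmax Y h1 h2)
      (fun X h1 h2 h3 => hLVuniq X ⟨h1, h2, h3⟩) hc hc' hcW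
  have lamS := lamSupp hlam
  -- Lemma X: a candidate on some ballot is on the ballot of every approver
  have lemX : ∀ c : κ, ∀ j0 ∈ E.N, c ∈ E.L j0 → ∀ j ∈ E.N, c ∈ E.A j → c ∈ E.L j := by
    intro c j0 hj0 hcL j hj hcA
    by_contra hcLj
    have hcA0 : c ∈ E.A j0 := hsubLA j0 hj0 hcL
    have hLK : E.L j ⊆ (E.A j).filter (fun a => f a < f c) := by
      intro a ha
      have haA : a ∈ E.A j := hsubLA j hj ha
      exact mem_filter.mpr ⟨haA, hcons j hj a haA c hcA ha hcLj⟩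
    have hKK : (E.A j).filter (fun a => f a < f c) ⊆ (E.A j0).filter (fun a => f a < f c) := by
      intro a ha
      obtain ⟨haA, hfa⟩ := mem_filter.mp ha
      refine mem_filter.mpr ⟨?_, hfa⟩
      have hwit : ((E.N.filter fun i => a ∈ E.A i) ∩ (E.N.filter fun i => c ∈ E.A i)).Nonempty := by
        refine ⟨j, ?_⟩
        rw [mem_inter, mem_filter, mem_filter]
        exact ⟨⟨hj, haA⟩, ⟨hj, hcA⟩⟩
      rcases lamS a c hwit with hsub | hsub
      · by_cases heq : (E.N.filter fun i => a ∈ E.A i) = (E.N.filter fun i => c ∈ E.A i)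
        · have hj0m : j0 ∈ E.N.filter fun i => a ∈ E.A i := by
            rw [heq, mem_filter]; exact ⟨hj0, hcA0⟩
          exact (mem_filter.mp hj0m).2
        · have hlt : sAVcS E a < sAVcS E c := card_lt_card (ssubset_of_subset_of_ne hsub heq)
          have hfc : f c < f a := hfav c (E.A_sub_C j hj hcA) a (E.A_sub_C j hj haA) hlt
          omega
      · have hj0m : j0 ∈ E.N.filter fun i => a ∈ E.A i := by
          apply hsub
          rw [mem_filter]; exact ⟨hj0, hcA0⟩
        exact (mem_filter.mp hj0m).2
    have hK0 : (E.A j0).filter (fun a => f a < f c) ⊆ (E.L j0).erase c := by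
      intro a ha
      obtain ⟨haA, hfa⟩ := mem_filter.mp ha
      have hane : a ≠ c := fun h => by rw [h] at hfa; omega
      have haL : a ∈ E.L j0 := by
        by_contra haL
        have := hcons j0 hj0 c hcA0 a haA hcL haL
        omega
      exact mem_erase.mpr ⟨hane, haL⟩
    have h1 : E.l ≤ ((E.A j).filter (fun a => f a < f c)).card :=
      (E.ballot_card j hj) ▸ card_le_card hLK
    have h2 := card_le_card hKK
    have h3 := card_le_card hK0
    rw [card_erase_of_mem hcL, E.ballot_card j0 hj0] at h3
    have := E.one_le_l
    omega
  have hLVAV : ∀ c : κ, 1 ≤ sLVcS E c → sLVcS E c = sAVcS E c := by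
    intro c hc
    obtain ⟨j0, hj0m⟩ := card_pos.mp hc
    obtain ⟨hj0, hcL⟩ := mem_filter.mp hj0m
    unfold sLVcS sAVcS
    congr 1
    ext i
    rw [mem_filter, mem_filter]
    constructor
    · rintro ⟨hi, hL⟩; exact ⟨hi, hsubLA i hi hL⟩
    · rintro ⟨hi, hA⟩; exact ⟨hi, lemX c j0 hj0 hcL i hi hA⟩
  unfold sCCS
  apply card_le_card
  intro i hi
  obtain ⟨hiN, a, haI⟩ := mem_filter.mp hi
  obtain ⟨haW, haA⟩ := mem_inter.mp haI
  obtain ⟨t, htA, htmin⟩ := Finset.exists_min_image (E.A i) f ⟨a, haA⟩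
  have htL : t ∈ E.L i := by
    by_contra htL
    have hLne : (E.L i).Nonempty := card_pos.mp (by rw [E.ballot_card i hiN]; exact E.one_le_l)
    obtain ⟨b, hbL⟩ := hLne
    have hbA := hsubLA i hiN hbL
    have hfb := hcons i hiN b hbA t htA hbL htL
    have := htmin b hbA
    omega
  have htC : t ∈ E.C := E.A_sub_C i hiN htA
  have htW : t ∈ WAV := by
    by_contra htW
    have hlt := sepAV a haW t htC htW
    have := hfav a (hAVsub haW) t htC hlt
    have := htmin a haA
    omega
  have htLV : t ∈ WLV := by
    by_contra htLV
    have hne : (WLV \ WAV).Nonempty := by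
      by_contra hne
      rw [not_nonempty_iff_eq_empty, sdiff_eq_empty_iff_subset] at hne
      have heq : WLV = WAV := eq_of_subset_of_card_le hne (by rw [hLVcard, hAVcard])
      exact htLV (heq ▸ htW)
    obtain ⟨w, hw⟩ := hne
    obtain ⟨hwL, hwA⟩ := mem_sdiff.mp hw
    have hsep1 := sepLV w hwL t htC htLV
    have ht1 : 1 ≤ sLVcS E t := by
      have : i ∈ E.N.filter fun j => t ∈ E.L j := mem_filter.mpr ⟨hiN, htL⟩
      exact card_pos.mpr ⟨i, this⟩
    have hw1 : 1 ≤ sLVcS E w := by omega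
    have e1 := hLVAV t ht1
    have e2 := hLVAV w hw1
    have hsep2 := sepAV t htW w (hLVsub hwL) hwA
    omega
  refine mem_filter.mpr ⟨hiN, ⟨t, mem_inter.mpr ⟨htLV, htA⟩⟩⟩
end

section
/- The AV-guarantee of Limited Voting is 0: for every real ε > 0, there exist an election E = (N, C, k, l, A, L) and a winning committee W ∈ LV(E) such that s_AV(W) < ε · max_{W' ⊆ C, |W'| = k} s_AV(W'). -/
open Finset

variable {V C : Type*} [Fintype V] [DecidableEq V] [Fintype C] [DecidableEq C]

/-!
Take `k = l = 1` and let voters and candidates coincide. A single voter approves only the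
candidate `a`; every other voter approves every candidate except `a`; each voter's ballot is
the singleton of themself. All candidates then tie under Limited Voting with one vote each, so
`{a}` is an LV-winner, yet `a` has AV-score `1` while every other candidate has AV-score
`|C| - 1`, which is unbounded.
-/

lemma mem_LVwin_of_sLVc_eq (E : Election V C) {s : ℕ} (hs : ∀ c, sLVc E c = s)
    {W : Finset C} (hW : W.card = E.k) : W ∈ LVwin E := by
  have hsLV : ∀ W' : Finset C, sLV E W' = W'.card * s := fun W' => by
    simp only [sLV, hs, sum_const, smul_eq_mul]
  refine ⟨hW, fun W' hW' => ?_⟩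
  rw [hsLV, hsLV, hW, hW']

lemma sAV_le_sAV_singleton (E : Election V C) (hk : E.k = 1) {c : C}
    (hc : ∀ c', sAVc E c' ≤ sAVc E c) {W : Finset C} (hW : W.card = E.k) :
    sAV E W ≤ sAV E {c} := by
  obtain ⟨c', rfl⟩ := card_eq_one.mp (hW.trans hk)
  simpa only [sAV, sum_singleton] using hc c'

section OneVsRest

variable {α : Type*} [Fintype α] [DecidableEq α]

def oneVsRestApproval (a i : α) : Finset α := if i = a then {a} else {a}ᶜ

lemma mem_oneVsRestApproval {a c i : α} : c ∈ oneVsRestApproval a i ↔ (c = a ↔ i = a) := by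
  by_cases hi : i = a <;> simp [oneVsRestApproval, hi]

lemma self_mem_oneVsRestApproval (a i : α) : i ∈ oneVsRestApproval a i :=
  mem_oneVsRestApproval.mpr Iff.rfl

def oneVsRest (a : α) : Election α α where
  k := 1
  l := 1
  A := oneVsRestApproval a
  L i := {i}
  k_le_card := Fintype.card_pos_iff.mpr ⟨a⟩
  one_le_l := le_rfl
  l_le_k := le_rfl
  ballot_card _ := card_singleton _
  ballot_sub_approval i _ := singleton_subset_iff.mpr (self_mem_oneVsRestApproval a i)
  approval_ssub_ballot i h :=
    absurd h (not_lt.mpr (card_pos.mpr ⟨i, self_mem_oneVsRestApproval a i⟩))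

lemma sLVc_oneVsRest (a c : α) : sLVc (oneVsRest a) c = 1 := by
  simp [sLVc, oneVsRest, filter_eq]

lemma sAVc_oneVsRest_self (a : α) : sAVc (oneVsRest a) a = 1 := by
  simp only [sAVc, oneVsRest, mem_oneVsRestApproval, true_iff, filter_eq', mem_univ, if_true,
    card_singleton]

lemma sAVc_oneVsRest_of_ne {a c : α} (hc : c ≠ a) :
    sAVc (oneVsRest a) c = Fintype.card α - 1 := by
  simp only [sAVc, oneVsRest, mem_oneVsRestApproval, hc, false_iff, filter_ne', mem_univ,
    card_erase_of_mem, card_univ]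

lemma sAVc_oneVsRest_le_of_ne [Nontrivial α] {a c : α} (hc : c ≠ a) (c' : α) :
    sAVc (oneVsRest a) c' ≤ sAVc (oneVsRest a) c := by
  have : 1 < Fintype.card α := Fintype.one_lt_card
  rw [sAVc_oneVsRest_of_ne hc]
  rcases eq_or_ne c' a with rfl | hc'
  · rw [sAVc_oneVsRest_self]; omega
  · rw [sAVc_oneVsRest_of_ne hc']

end OneVsRest

/-- The AV-guarantee of Limited Voting is 0: for every `ε > 0` there are an
election and an LV-winning committee `W` with
`s_AV(W) < ε · max_{|W'| = k} s_AV(W')`. -/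
theorem stmt18 :
    ∀ ε : ℝ, 0 < ε →
      ∃ (nV nC : ℕ) (E : Election (Fin nV) (Fin nC)),
        ∃ W ∈ LVwin E, ∃ Wmax : Finset (Fin nC), Wmax.card = E.k ∧
          (∀ W' : Finset (Fin nC), W'.card = E.k → sAV E W' ≤ sAV E Wmax) ∧
          (sAV E W : ℝ) < ε * (sAV E Wmax : ℝ) := by
  intro ε hε
  obtain ⟨m, hm⟩ := exists_nat_gt ε⁻¹
  have hc : (1 : Fin (m + 2)) ≠ 0 := Fin.zero_lt_one.ne'
  refine ⟨m + 2, m + 2, oneVsRest 0, {0},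
    mem_LVwin_of_sLVc_eq _ (sLVc_oneVsRest 0) rfl, {1}, rfl,
    fun W' => sAV_le_sAV_singleton _ rfl (sAVc_oneVsRest_le_of_ne hc), ?_⟩
  simp only [sAV, sum_singleton, sAVc_oneVsRest_self, sAVc_oneVsRest_of_ne hc,
    Fintype.card_fin]
  push_cast
  have : 1 < ε * m := by rwa [inv_lt_iff_one_lt_mul₀ hε, mul_comm] at hm
  nlinarith
end
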